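/- arXiv:1706.09246 — 12 statements merged into one kernel-verified Lean document; each statement's English description precedes it below -/
import Mathlib

section
/- Let n and b be natural numbers with b ≥ 2. Then for every nonzero element t of the Thabit numerical semigroup base b, T_b(n), the number b·t + (b−1) also belongs to T_b(n). -/
/-- The Thabit numerical semigroup base `b`: the additive submonoid of ℕ generated by
`{(b+1)·b^(n+i) − 1 : i ∈ ℕ}`. -/
def thabitSemigroup (b n : ℕ) : AddSubmonoid ℕ :=
  AddSubmonoid.closure {m : ℕ | ∃ i : ℕ, m = (b + 1) * b ^ (n + i) - 1}

/-- Writing a nonzero `t` as a sum of generators `g₁ + ⋯ + gₖ`, one has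
`b • t + c = (b • g₁ + c) + b • (g₂ + ⋯ + gₖ)`. -/
theorem AddSubmonoid.nsmul_add_mem_closure {M : Type*} [AddCommMonoid M] {s : Set M} {b : ℕ}
    {c : M} (hs : ∀ g ∈ s, b • g + c ∈ closure s) {t : M} (ht : t ∈ closure s) (ht0 : t ≠ 0) :
    b • t + c ∈ closure s := by
  induction ht using closure_induction with
  | mem g hg => exact hs g hg
  | zero => exact absurd rfl ht0
  | add x y hx hy ihx ihy =>
    by_cases hx0 : x = 0
    · subst hx0
      rw [zero_add] at ht0 ⊢
      exact ihy ht0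
    rw [smul_add, add_right_comm]
    exact add_mem (ihx hx0) (nsmul_mem hy b)

theorem thabit_mul_add_eq (b k : ℕ) :
    b * ((b + 1) * b ^ k - 1) + (b - 1) = (b + 1) * b ^ (k + 1) - 1 := by
  rcases Nat.eq_zero_or_pos b with rfl | hb
  · simp
  have hpos : 1 ≤ (b + 1) * b ^ k := Nat.one_le_iff_ne_zero.mpr (by positivity)
  have hmul : (b + 1) * b ^ (k + 1) = b * ((b + 1) * b ^ k) := by ring
  rw [hmul, Nat.mul_sub_one]
  have : b ≤ b * ((b + 1) * b ^ k) := Nat.le_mul_of_pos_right b hpos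
  omega

theorem thabit_mul_add_mem_general (n b : ℕ) (t : ℕ)
    (ht : t ∈ thabitSemigroup b n) (ht0 : t ≠ 0) :
    b * t + (b - 1) ∈ thabitSemigroup b n := by
  rw [← smul_eq_mul]
  refine AddSubmonoid.nsmul_add_mem_closure ?_ ht ht0
  rintro _ ⟨i, rfl⟩
  exact AddSubmonoid.subset_closure ⟨i + 1, thabit_mul_add_eq b (n + i)⟩

theorem thabit_mul_add_mem (n b : ℕ) (hb : 2 ≤ b) (t : ℕ)
    (ht : t ∈ thabitSemigroup b n) (ht0 : t ≠ 0) :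
    b * t + (b - 1) ∈ thabitSemigroup b n :=
  thabit_mul_add_mem_general n b t ht ht0
end

section
/- Let n and b be natural numbers with b ≥ 2. Then T_b(n) = ⟨{(b+1)·b^(n+i) − 1 : i ∈ {0,1,…,n+1}}⟩, i.e., the Thabit numerical semigroup base b is generated by the finitely many elements (b+1)·b^(n+i) − 1 for 0 ≤ i ≤ n+1. -/
lemma thabit_key (b n k : ℕ) (hb : 2 ≤ b) :
    (b + 1) * b ^ (n + (n + 2 + k)) - 1 =
      (b ^ k * ((b ^ 2 - 1) * b ^ n - 1)) * ((b + 1) * b ^ (n + 0) - 1)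
        + b ^ k * ((b + 1) * b ^ (n + 1) - 1)
        + ((b + 1) * b ^ (n + (n + k)) - 1) := by
  have hpow : ∀ t : ℕ, 1 ≤ b ^ t := fun t => Nat.one_le_pow _ _ (by omega)
  have h1 : ∀ t : ℕ, 1 ≤ (b + 1) * b ^ t := fun t =>
    Nat.one_le_of_lt (by have := hpow t; nlinarith)
  have hb2 : 1 ≤ b ^ 2 := hpow 2
  have hc : 1 ≤ (b ^ 2 - 1) * b ^ n := by
    have := hpow n
    have : 4 ≤ b ^ 2 := by nlinarith
    calc 1 ≤ 1 * 1 := by norm_num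
    _ ≤ (b ^ 2 - 1) * b ^ n := Nat.mul_le_mul (by omega) (hpow n)
  zify [h1 _, hc, hb2]
  ring

theorem thabit_finitely_generated (n b : ℕ) (hb : 2 ≤ b) :
    thabitSemigroup b n =
      AddSubmonoid.closure {m : ℕ | ∃ i ≤ n + 1, m = (b + 1) * b ^ (n + i) - 1} := by
  apply le_antisymm
  · rw [thabitSemigroup, AddSubmonoid.closure_le]
    rintro m ⟨i, rfl⟩
    induction i using Nat.strong_induction_on with
    | _ i ih =>
      by_cases hi : i ≤ n + 1
      · exact AddSubmonoid.subset_closure ⟨i, hi, rfl⟩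
      · have hik : i = n + 2 + (i - (n + 2)) := by omega
        rw [hik, thabit_key b n (i - (n + 2)) hb]
        have h0 : (b + 1) * b ^ (n + 0) - 1 ∈
            AddSubmonoid.closure {m : ℕ | ∃ i ≤ n + 1, m = (b + 1) * b ^ (n + i) - 1} :=
          AddSubmonoid.subset_closure ⟨0, by omega, rfl⟩
        have h1 : (b + 1) * b ^ (n + 1) - 1 ∈
            AddSubmonoid.closure {m : ℕ | ∃ i ≤ n + 1, m = (b + 1) * b ^ (n + i) - 1} :=
          AddSubmonoid.subset_closure ⟨1, by omega, rfl⟩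
        refine add_mem (add_mem ?_ ?_) ?_
        · rw [← smul_eq_mul]
          exact nsmul_mem h0 _
        · rw [← smul_eq_mul]
          exact nsmul_mem h1 _
        · exact ih (n + (i - (n + 2))) (by omega)
  · exact AddSubmonoid.closure_mono (by rintro m ⟨i, _, rfl⟩; exact ⟨i, rfl⟩)
end

section
/- Let n and b be natural numbers with b ≥ 2, and let A = {(b+1)·b^(n+i) − 1 : i ∈ {0,1,…,n+1}}. Then A is a minimal system of generators of T_b(n): the submonoid of ℕ generated by A equals T_b(n), no proper subset of A generates T_b(n), and A has exactly n+2 elements; in particular the embedding dimension of T_b(n) is n+2. -/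
/-! With `M = (b + 1) b^n` the generators are `t_i = M b^i - 1`. Writing `b^i = (b - 1) G + 1`
with `G = ∑_{j<i} b^j`, division of `G` by `M - 1` expresses `t_i` as a nonnegative combination
of `t_0 = M - 1` and `t_1 = M b - 1` as soon as `G ≥ M - 1`, which holds for `i ≥ n + 2`.
Conversely every `t_i` is `≡ -1 mod M`, so a sum of `K ≥ 2` generators that is again `≡ -1` has
`K ≡ 1 mod M`, hence `K ≥ M + 1` terms, and is at least `M² - 1 > t_{n+1}`: no `t_j` with
`j ≤ n + 1` is a sum of the others. -/

open Finset

theorem mul_pow_sub_one_mem_closure_pair {M b i : ℕ} (hM : 2 ≤ M) (hb : 2 ≤ b)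
    (hi : M - 1 ≤ ∑ j ∈ range i, b ^ j) :
    M * b ^ i - 1 ∈ AddSubmonoid.closure ({M - 1, M * b - 1} : Set ℕ) := by
  have hbi : b ^ i = (b - 1) * ∑ j ∈ range i, b ^ j + 1 := by
    simpa [Nat.sub_add_cancel (hb.trans' one_le_two), mul_comm] using
      (geom_sum_mul_add (b - 1) i).symm
  rw [hbi, AddSubmonoid.mem_closure_pair]
  obtain ⟨q, r, hq, hr, hqr⟩ :
      ∃ q r, 1 ≤ q ∧ r < M - 1 ∧ ∑ j ∈ range i, b ^ j = (M - 1) * q + r :=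
    ⟨_, _, Nat.div_pos hi (by omega), Nat.mod_lt _ (by omega), (Nat.div_add_mod _ (M - 1)).symm⟩
  rw [hqr]
  -- `x (M - 1) + y (M b - 1) = M (x + b y) - (x + y)`; take `y = r` and `x + y = q (b - 1) M + 1`
  refine ⟨q * (b - 1) * M + 1 - r, r, ?_⟩
  have hrle : r ≤ q * (b - 1) * M + 1 := by
    have : M ≤ q * (b - 1) * M := Nat.le_mul_of_pos_left M (Nat.mul_pos hq (by omega))
    omega
  have hMb : 1 ≤ M * b := by nlinarith
  have hpos : 1 ≤ M * ((b - 1) * ((M - 1) * q + r) + 1) := Nat.mul_pos (by omega) (Nat.succ_pos _)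
  simp only [smul_eq_mul]
  zify [hM.trans' one_le_two, hb.trans' one_le_two, hrle, hMb, hpos]
  ring

theorem dvd_sum_add_length_and_le_sum {M : ℕ} {l : List ℕ}
    (h : ∀ y ∈ l, M ∣ y + 1 ∧ M - 1 ≤ y) : M ∣ l.sum + l.length ∧ (M - 1) * l.length ≤ l.sum := by
  induction l with
  | nil => simp
  | cons y l ih =>
    obtain ⟨⟨hdvd, hle⟩, hl⟩ := List.forall_mem_cons.1 h
    obtain ⟨ihdvd, ihle⟩ := ih hl
    simp only [List.sum_cons, List.length_cons]
    refine ⟨?_, by rw [mul_add_one]; omega⟩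
    rw [show y + l.sum + (l.length + 1) = (y + 1) + (l.sum + l.length) by ring]
    exact dvd_add hdvd ihdvd

theorem mem_of_mem_closure_of_dvd_add_one_of_lt {M x : ℕ} {S : Set ℕ}
    (hS : ∀ s ∈ S, M ∣ s + 1 ∧ M - 1 ≤ s)
    (hx : x ∈ AddSubmonoid.closure S) (hdvd : M ∣ x + 1) (hlt : x < M ^ 2 - 1) : x ∈ S := by
  obtain ⟨l, hlS, rfl⟩ := AddSubmonoid.exists_list_of_mem_closure hx
  have hM : M ≠ 0 := by rintro rfl; simp at hdvd
  rcases l with _ | ⟨y, _ | ⟨z, l⟩⟩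
  · simp_all
  · simpa using hlS y (List.mem_singleton_self y)
  · set l' := y :: z :: l
    obtain ⟨hKdvd, hKle⟩ := dvd_sum_add_length_and_le_sum fun y hy => hS y (hlS y hy)
    have hK : 2 ≤ l'.length := by simp [l']
    have hMK : M ≤ l'.length - 1 := by
      refine Nat.le_of_dvd (by omega) ?_
      have := Nat.dvd_sub hKdvd hdvd
      rwa [show l'.sum + l'.length - (l'.sum + 1) = l'.length - 1 by omega] at this
    have : M ^ 2 - 1 ≤ (M - 1) * l'.length := calc
      M ^ 2 - 1 = (M - 1) * (M + 1) := by simpa [mul_comm] using Nat.sq_sub_sq M 1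
      _ ≤ (M - 1) * l'.length := Nat.mul_le_mul_left _ (by omega)
    omega

section Thabit

variable {b : ℕ} (n : ℕ)

theorem thabit_generator_add_one (hb : 0 < b) (i : ℕ) :
    (b + 1) * b ^ (n + i) - 1 + 1 = (b + 1) * b ^ n * b ^ i := by
  rw [Nat.sub_add_cancel (Nat.one_le_iff_ne_zero.2 (by positivity)), pow_add, mul_assoc]

theorem thabit_generator_strictMono (hb : 1 < b) :
    StrictMono fun i => (b + 1) * b ^ (n + i) - 1 := by
  intro i j hij
  have hi := thabit_generator_add_one n hb.le i
  have hj := thabit_generator_add_one n hb.le j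
  have := Nat.mul_lt_mul_of_pos_left (Nat.pow_lt_pow_right hb hij)
    (show 0 < (b + 1) * b ^ n by positivity)
  dsimp only
  omega

theorem thabit_generator_mem_closure (hb : 2 ≤ b) (i : ℕ) :
    (b + 1) * b ^ (n + i) - 1 ∈
      AddSubmonoid.closure {m : ℕ | ∃ i ≤ n + 1, m = (b + 1) * b ^ (n + i) - 1} := by
  rcases le_or_gt i (n + 1) with hi | hi
  · exact AddSubmonoid.subset_closure ⟨i, hi, rfl⟩
  have hM : 2 ≤ (b + 1) * b ^ n :=
    le_mul_of_le_of_one_le (by omega) (Nat.one_le_pow _ _ (by omega))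
  have hsum : (b + 1) * b ^ n - 1 ≤ ∑ j ∈ range i, b ^ j := calc
    (b + 1) * b ^ n - 1 ≤ ∑ j ∈ {n, n + 1}, b ^ j := by rw [sum_pair (by omega)]; ring_nf; omega
    _ ≤ ∑ j ∈ range i, b ^ j :=
      sum_le_sum_of_subset (by intro j; simp only [mem_insert, mem_singleton, mem_range]; omega)
  have hpair : ({(b + 1) * b ^ n - 1, (b + 1) * b ^ n * b - 1} : Set ℕ) ⊆
      {m : ℕ | ∃ i ≤ n + 1, m = (b + 1) * b ^ (n + i) - 1} := by
    rintro m (rfl | rfl)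
    · exact ⟨0, by omega, rfl⟩
    · exact ⟨1, le_add_self, by rw [pow_add, pow_one, mul_assoc]⟩
  have := AddSubmonoid.closure_mono hpair (mul_pow_sub_one_mem_closure_pair hM hb hsum)
  rwa [mul_assoc, ← pow_add] at this

theorem thabit_generator_dvd_and_le (hb : 0 < b) (i : ℕ) :
    (b + 1) * b ^ n ∣ (b + 1) * b ^ (n + i) - 1 + 1 ∧
      (b + 1) * b ^ n - 1 ≤ (b + 1) * b ^ (n + i) - 1 := by
  have h := thabit_generator_add_one n hb i
  have : (b + 1) * b ^ n ≤ (b + 1) * b ^ n * b ^ i := Nat.le_mul_of_pos_right _ (by positivity)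
  exact ⟨h ▸ dvd_mul_right _ _, by omega⟩

theorem thabit_generator_lt (hb : 0 < b) {i : ℕ} (hi : i ≤ n + 1) :
    (b + 1) * b ^ (n + i) - 1 < ((b + 1) * b ^ n) ^ 2 - 1 := by
  have hbi : b ^ i < (b + 1) * b ^ n := calc
    b ^ i ≤ b ^ (n + 1) := Nat.pow_le_pow_right hb hi
    _ < (b + 1) * b ^ n := by rw [pow_succ']; gcongr; omega
  have := thabit_generator_add_one n hb i
  have := Nat.mul_lt_mul_of_pos_left hbi (show 0 < (b + 1) * b ^ n by positivity)
  rw [sq]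
  omega

end Thabit

theorem thabit_minimal_system_of_generators (n b : ℕ) (hb : 2 ≤ b) :
    AddSubmonoid.closure {m : ℕ | ∃ i ≤ n + 1, m = (b + 1) * b ^ (n + i) - 1}
        = thabitSemigroup b n ∧
    (∀ X : Set ℕ, X ⊂ {m : ℕ | ∃ i ≤ n + 1, m = (b + 1) * b ^ (n + i) - 1} →
        AddSubmonoid.closure X ≠ thabitSemigroup b n) ∧
    Set.ncard {m : ℕ | ∃ i ≤ n + 1, m = (b + 1) * b ^ (n + i) - 1} = n + 2 := by
  have hclosure : AddSubmonoid.closure {m : ℕ | ∃ i ≤ n + 1, m = (b + 1) * b ^ (n + i) - 1}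
      = thabitSemigroup b n :=
    le_antisymm (AddSubmonoid.closure_mono fun m ⟨i, _, hm⟩ => ⟨i, hm⟩)
      (AddSubmonoid.closure_le.2 fun m ⟨i, hm⟩ => hm ▸ thabit_generator_mem_closure n hb i)
  have hb0 : 0 < b := by omega
  refine ⟨hclosure, fun X hX hXA => ?_, ?_⟩
  · obtain ⟨t, ⟨j, hj, rfl⟩, htX⟩ := Set.exists_of_ssubset hX
    refine htX (mem_of_mem_closure_of_dvd_add_one_of_lt (fun s hs => ?_) ?_
      (thabit_generator_dvd_and_le n hb0 j).1 (thabit_generator_lt n hb0 hj))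
    · obtain ⟨i, -, rfl⟩ := hX.1 hs
      exact thabit_generator_dvd_and_le n hb0 i
    · rw [hXA, ← hclosure]
      exact AddSubmonoid.subset_closure ⟨j, hj, rfl⟩
  · have himage : {m : ℕ | ∃ i ≤ n + 1, m = (b + 1) * b ^ (n + i) - 1}
        = (fun i => (b + 1) * b ^ (n + i) - 1) '' Set.Iic (n + 1) := by
      ext; simp [eq_comm]
    rw [himage, Set.ncard_image_of_injective _ (thabit_generator_strictMono n hb).injective,
      ← Finset.coe_Iic, Set.ncard_coe_finset, Nat.card_Iic]
end

section
/- Let n and b be natural numbers with b ≥ 2, and set s_0 = (b+1)·b^n − 1. If x ∈ T_b(n) and x is not divisible by s_0, then there exists y ∈ T_b(n) with x = y + (b−1); that is, x − (b−1) ∈ T_b(n). -/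
/-!
The generators satisfy `s_{i+1} = b · s_i + (b − 1)`, so every generator other than `s_0` is
`b − 1` more than an element of `T_b(n)`. Since the translate `(b − 1) + T_b(n)` absorbs
addition by `T_b(n)`, an element of `T_b(n)` is either a sum of copies of `s_0` or lies in
that translate.
-/

theorem AddSubmonoid.mem_or_exists_add_of_mem_closure {M : Type*} [AddCommMonoid M]
    {G : Set M} {P : AddSubmonoid M} {c : M}
    (hG : ∀ g ∈ G, g ∈ P ∨ ∃ y ∈ closure G, g = y + c) {x : M} (hx : x ∈ closure G) :
    x ∈ P ∨ ∃ y ∈ closure G, x = y + c := by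
  induction hx using AddSubmonoid.closure_induction with
  | mem g hg => exact hG g hg
  | zero => exact .inl P.zero_mem
  | add a a' _ _ iha iha' =>
    rcases iha with ha | ⟨y, hy, rfl⟩
    · rcases iha' with ha' | ⟨y', hy', rfl⟩
      · exact .inl (P.add_mem ha ha')
      · exact .inr ⟨a + y', add_mem (by assumption) hy', (add_assoc _ _ _).symm⟩
    · exact .inr ⟨y + a', add_mem hy (by assumption), add_right_comm _ _ _⟩

theorem thabit_generator_succ (b m : ℕ) :
    (b + 1) * b ^ (m + 1) - 1 = b * ((b + 1) * b ^ m - 1) + (b - 1) := by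
  rcases Nat.eq_zero_or_pos b with rfl | hb
  · simp
  obtain ⟨d, hd⟩ : ∃ d, (b + 1) * b ^ m = d + 1 :=
    Nat.exists_eq_add_one.mpr (by positivity)
  rw [pow_succ, ← mul_assoc, hd, add_one_mul, mul_comm d b, Nat.add_sub_cancel]
  omega

theorem thabit_generator_mem_or_exists_add (b n : ℕ) {g : ℕ}
    (hg : ∃ i : ℕ, g = (b + 1) * b ^ (n + i) - 1) :
    (b + 1) * b ^ n - 1 ∣ g ∨ ∃ y ∈ thabitSemigroup b n, g = y + (b - 1) := by
  obtain ⟨i, rfl⟩ := hg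
  cases i with
  | zero => exact .inl dvd_rfl
  | succ i =>
    have hmem : (b + 1) * b ^ (n + i) - 1 ∈ thabitSemigroup b n :=
      AddSubmonoid.subset_closure ⟨i, rfl⟩
    refine .inr ⟨b * ((b + 1) * b ^ (n + i) - 1), ?_, thabit_generator_succ b (n + i)⟩
    simpa only [smul_eq_mul] using AddSubmonoid.nsmul_mem _ hmem b

theorem thabit_sub_pred_base_mem_general (n b : ℕ) (x : ℕ)
    (hx : x ∈ thabitSemigroup b n)
    (hndvd : ¬ ((b + 1) * b ^ n - 1) ∣ x) :
    ∃ y ∈ thabitSemigroup b n, x = y + (b - 1) := by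
  have hmultiple : ∀ z, z ∈ (Ideal.span {(b + 1) * b ^ n - 1}).toAddSubmonoid ↔
      (b + 1) * b ^ n - 1 ∣ z := fun _ => Ideal.mem_span_singleton
  refine (AddSubmonoid.mem_or_exists_add_of_mem_closure (fun g hg => ?_) hx).resolve_left
    (by rwa [hmultiple])
  rw [hmultiple]
  exact thabit_generator_mem_or_exists_add b n hg

theorem thabit_sub_pred_base_mem (n b : ℕ) (hb : 2 ≤ b) (x : ℕ)
    (hx : x ∈ thabitSemigroup b n)
    (hndvd : ¬ ((b + 1) * b ^ n - 1) ∣ x) :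
    ∃ y ∈ thabitSemigroup b n, x = y + (b - 1) :=
  thabit_sub_pred_base_mem_general n b x hx hndvd
end

section
/- Let n and b be natural numbers with n ≥ 1 and b ≥ 2, and write s_i = (b+1)·b^(n+i) − 1. Then (b−1)·s_n + (b−1)·s_(n+1) is the greatest element of the Apéry set Ap(T_b(n), s_0). -/
/-!
With `C = (b+1)·b^n = b^n + b^(n+1)` the generators are `s_i = C·b^i − 1` and the claimed maximum
is `M = (b−1)(C² − 2)`. An element of `T_b(n)` is `C·N − K`, where `N` is a sum of `K` powers of `b`.
Such pairs satisfy `K ≤ N`, `K ≡ N (mod b−1)`, and `K` is at least the base-`b` digit sum of `N`;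
conversely, splitting one `b^e` into `b` copies of `b^(e−1)` raises `K` by `b − 1` at fixed `N`.

Starting from `N = (b−1)·C = (b−1)(b^n + b^(n+1))` with `K = 2(b−1)` we get elements `≤ M` of
`T_b(n)` in every residue class modulo `s_0`, so no element of the Apéry set exceeds `M`.
If `M − s_0 = C·N − K` were in `T_b(n)`, the congruence modulo `b − 1` and the bounds on `K` would
force `N = (b−1)·C − 1 = b^(n+2) − b^n − 1` and `K = 2b − 3`; but the digit sum of this `N` is
`(n+2)(b−1) − 1 > 2b − 3`.
-/

namespace Nat

theorem digits_sum_add_mul {b r : ℕ} (hb : 1 < b) (hr : r < b) (q : ℕ) :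
    (b.digits (r + b * q)).sum = r + (b.digits q).sum := by
  rcases eq_or_ne r 0 with rfl | hr0
  · rcases eq_or_ne q 0 with rfl | hq0
    · simp
    · rw [digits_add b hb 0 q hr (Or.inr hq0), List.sum_cons]
  · rw [digits_add b hb r q hr (Or.inl hr0), List.sum_cons]

theorem digits_sum_succ_le {b : ℕ} (hb : 1 < b) (n : ℕ) :
    (b.digits (n + 1)).sum ≤ (b.digits n).sum + 1 := by
  induction n using Nat.strong_induction_on with
  | _ n ih =>
    have hmod := n.mod_lt (by omega : b > 0)
    rw [← n.mod_add_div b, digits_sum_add_mul hb hmod]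
    by_cases hcarry : n % b + 1 < b
    · rw [add_right_comm, digits_sum_add_mul hb hcarry]
      omega
    · have hsucc : n % b + b * (n / b) + 1 = 0 + b * (n / b + 1) := by
        rw [mul_add]
        omega
      rw [hsucc, digits_sum_add_mul hb (r := 0) (by omega)]
      have hn : 0 < n := by
        have := n.mod_add_div b
        omega
      have := ih (n / b) (Nat.div_lt_self hn hb)
      omega

theorem digits_sum_add_pow_le {b : ℕ} (hb : 1 < b) (n e : ℕ) :
    (b.digits (n + b ^ e)).sum ≤ (b.digits n).sum + 1 := by
  induction e generalizing n with
  | zero => exact digits_sum_succ_le hb n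
  | succ e ih =>
    have hmod := n.mod_lt (by omega : b > 0)
    have hshift : n + b ^ (e + 1) = n % b + b * (n / b + b ^ e) := by
      rw [pow_succ', mul_add]
      have := n.mod_add_div b
      omega
    rw [hshift, digits_sum_add_mul hb hmod, ← n.mod_add_div b, digits_sum_add_mul hb hmod,
      n.mod_add_div b]
    have := ih (n / b)
    omega

theorem digits_sum_sum_map_pow_le_card {b : ℕ} (hb : 1 < b) (s : Multiset ℕ) :
    (b.digits (s.map (b ^ ·)).sum).sum ≤ Multiset.card s := by
  induction s using Multiset.induction_on with
  | empty => simp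
  | cons e s ih =>
    rw [Multiset.map_cons, Multiset.sum_cons, add_comm, Multiset.card_cons]
    exact (digits_sum_add_pow_le hb _ e).trans (by omega)

theorem ofDigits_replicate_sub_one_add_one {b : ℕ} (hb : 0 < b) (n : ℕ) :
    ofDigits b (List.replicate n (b - 1)) + 1 = b ^ n := by
  induction n with
  | zero => simp
  | succ n ih =>
    rw [List.replicate_succ, ofDigits_cons, pow_succ', ← ih, mul_add, mul_one]
    omega

theorem digits_sub_one_mul_add_one_mul_pow_sub_one {b : ℕ} (hb : 2 ≤ b) (n : ℕ) :
    b.digits ((b - 1) * ((b + 1) * b ^ n) - 1) = List.replicate n (b - 1) ++ [b - 2, b - 1] := by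
  have hval : (b - 1) * ((b + 1) * b ^ n) - 1
      = ofDigits b (List.replicate n (b - 1) ++ [b - 2, b - 1]) := by
    have hrep := ofDigits_replicate_sub_one_add_one (by omega : 0 < b) n
    simp only [ofDigits_append, List.length_replicate, ofDigits_cons, ofDigits_nil]
    obtain ⟨c, rfl⟩ : ∃ c, b = c + 2 := ⟨b - 2, by omega⟩
    simp only [Nat.add_sub_cancel, show c + 2 - 1 = c + 1 by omega] at hrep ⊢
    have : (c + 1) * ((c + 2 + 1) * (c + 2) ^ n)
        = (c + 2) ^ n * (c + (c + 2) * (c + 1 + (c + 2) * 0)) + (c + 2) ^ n := by ring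
    omega
  rw [hval, digits_ofDigits b (by omega)]
  · intro l hl
    simp only [List.mem_append, List.mem_replicate, List.mem_cons, List.not_mem_nil,
      or_false] at hl
    omega
  · simpa using (by omega : b - 1 ≠ 0)

end Nat

theorem natCast_eq_one_zmod_sub_one {b : ℕ} (hb : 0 < b) : (b : ZMod (b - 1)) = 1 := by
  have h := ZMod.natCast_self (b - 1)
  rwa [Nat.cast_sub hb, Nat.cast_one, sub_eq_zero] at h

section PowSums

variable {b : ℕ}

theorem card_le_sum_map_pow (hb : 0 < b) (s : Multiset ℕ) :
    Multiset.card s ≤ (s.map (b ^ ·)).sum := by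
  simpa using Multiset.card_nsmul_le_sum (s := s.map (b ^ ·)) (a := 1)
    (by simpa using fun e _ => Nat.one_le_pow e b hb)

theorem natCast_sum_map_pow (hb : 0 < b) (s : Multiset ℕ) :
    (((s.map (b ^ ·)).sum : ℕ) : ZMod (b - 1)) = Multiset.card s := by
  simp [Nat.cast_multiset_sum, natCast_eq_one_zmod_sub_one hb]

theorem exists_card_eq_add_of_card_lt (hb : 0 < b) {s : Multiset ℕ}
    (h : Multiset.card s < (s.map (b ^ ·)).sum) :
    ∃ t : Multiset ℕ, (t.map (b ^ ·)).sum = (s.map (b ^ ·)).sum ∧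
      Multiset.card t = Multiset.card s + (b - 1) := by
  obtain ⟨e, he, he0⟩ : ∃ e ∈ s, e ≠ 0 := by
    by_contra! h0
    have hones : s.map (b ^ ·) = s.map fun _ => 1 :=
      Multiset.map_congr rfl fun e he => by simp [h0 e he]
    simp [hones] at h
  obtain ⟨s', rfl⟩ := Multiset.exists_cons_of_mem he
  refine ⟨Multiset.replicate b (e - 1) + s', ?_, ?_⟩
  · have hpow : b ^ e = b * b ^ (e - 1) := by rw [← pow_succ', Nat.sub_add_cancel (by omega)]
    simp [hpow]
  · simp only [Multiset.card_add, Multiset.card_replicate, Multiset.card_cons]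
    omega

theorem exists_card_eq_add_mul (hb : 1 < b) (m : ℕ) {s : Multiset ℕ}
    (h : Multiset.card s + (b - 1) * m ≤ (s.map (b ^ ·)).sum) :
    ∃ t : Multiset ℕ, (t.map (b ^ ·)).sum = (s.map (b ^ ·)).sum ∧
      Multiset.card t = Multiset.card s + (b - 1) * m := by
  induction m generalizing s with
  | zero => exact ⟨s, rfl, rfl⟩
  | succ m ih =>
    obtain ⟨t, ht, hcard⟩ := exists_card_eq_add_of_card_lt (b := b) (by omega) (s := s) (by
      have : 1 ≤ b - 1 := by omega
      nlinarith)
    obtain ⟨u, hu, hucard⟩ := ih (s := t) (by rw [ht, hcard]; linarith [mul_add (b - 1) m 1])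
    exact ⟨u, hu.trans ht, by rw [hucard, hcard]; ring⟩

end PowSums

def aperySet (S : AddSubmonoid ℕ) (x : ℕ) : Set ℕ :=
  {s | s ∈ S ∧ ¬ ∃ t ∈ S, t + x = s}

theorem le_of_mem_aperySet {S : AddSubmonoid ℕ} {x M s : ℕ} (hx : x ∈ S)
    (hres : ∀ r < x, ∃ w ∈ S, w % x = r ∧ w ≤ M) (hs : s ∈ aperySet S x) : s ≤ M := by
  obtain ⟨hsS, hst⟩ := hs
  have hx0 : 0 < x := Nat.pos_of_ne_zero fun h => hst ⟨s, hsS, by rw [h, add_zero]⟩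
  obtain ⟨w, hwS, hw, hwM⟩ := hres (s % x) (s.mod_lt hx0)
  refine le_trans ?_ hwM
  by_contra! hws
  obtain ⟨k, hk⟩ := (Nat.modEq_iff_dvd' hws.le).mp hw
  obtain ⟨k, rfl⟩ := Nat.exists_eq_succ_of_ne_zero (n := k) (by rintro rfl; omega)
  refine hst ⟨w + k * x, S.add_mem hwS (by simpa using S.nsmul_mem hx k), ?_⟩
  rw [Nat.mul_succ, mul_comm] at hk
  omega

def mulPowSubOneClosure (C b : ℕ) : AddSubmonoid ℕ :=
  AddSubmonoid.closure (Set.range fun i => C * b ^ i - 1)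

theorem thabitSemigroup_eq_mulPowSubOneClosure (b n : ℕ) :
    thabitSemigroup b n = mulPowSubOneClosure ((b + 1) * b ^ n) b := by
  unfold thabitSemigroup mulPowSubOneClosure
  congr 1
  ext m
  simp [pow_add, mul_assoc, eq_comm]

section MulPowSubOneClosure

variable {C b : ℕ}

theorem sum_map_mul_pow_sub_one_add_card (hC : 0 < C) (hb : 0 < b) (s : Multiset ℕ) :
    (s.map fun i => C * b ^ i - 1).sum + Multiset.card s = C * (s.map (b ^ ·)).sum := by
  induction s using Multiset.induction_on with
  | empty => simp
  | cons e s ih =>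
    have : 0 < C * b ^ e := by positivity
    simp only [Multiset.map_cons, Multiset.sum_cons, Multiset.card_cons, mul_add]
    omega

theorem mem_mulPowSubOneClosure_iff {x : ℕ} (hC : 0 < C) (hb : 0 < b) :
    x ∈ mulPowSubOneClosure C b ↔
      ∃ s : Multiset ℕ, x + Multiset.card s = C * (s.map (b ^ ·)).sum := by
  constructor
  · intro hx
    induction hx using AddSubmonoid.closure_induction with
    | mem x hx =>
      obtain ⟨i, rfl⟩ := hx
      exact ⟨{i}, by simpa using sum_map_mul_pow_sub_one_add_card hC hb {i}⟩
    | zero => exact ⟨0, by simp⟩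
    | add x y _ _ hx hy =>
      obtain ⟨s, hs⟩ := hx
      obtain ⟨t, ht⟩ := hy
      exact ⟨s + t, by simp only [Multiset.card_add, Multiset.map_add, Multiset.sum_add]; linarith⟩
  · rintro ⟨s, hs⟩
    have hx : x = (s.map fun i => C * b ^ i - 1).sum := by
      have := sum_map_mul_pow_sub_one_add_card hC hb s
      omega
    rw [hx]
    exact AddSubmonoid.multiset_sum_mem _ _ fun y hy => by
      obtain ⟨i, -, rfl⟩ := Multiset.mem_map.mp hy
      exact AddSubmonoid.subset_closure ⟨i, rfl⟩

theorem eq_of_mul_mul_add_eq {B q K : ℕ} (hB : 1 ≤ B) (hC : 2 ≤ C) (hK : K + 1 ≤ B * q)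
    (h : C * (B * q) + (2 * B - 1) = B * (C * C) + K) : q = C := by
  zify [(by omega : 1 ≤ 2 * B)] at h hK hB hC
  rcases lt_trichotomy q C with hlt | heq | hgt
  · have hlt' : (q : ℤ) + 1 ≤ C := by exact_mod_cast hlt
    nlinarith [mul_le_mul_of_nonneg_left hlt' (by positivity : (0 : ℤ) ≤ B * C)]
  · exact heq
  · have hgt' : (C : ℤ) + 1 ≤ q := by exact_mod_cast hgt
    nlinarith [mul_nonneg (mul_nonneg (by positivity : (0 : ℤ) ≤ B) (by linarith : (0 : ℤ) ≤ C - 1))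
      (by linarith : (0 : ℤ) ≤ q - C - 1)]

theorem not_exists_add_sub_one_eq (hb : 2 ≤ b) (hC : 2 ≤ C) (hCmod : (C : ZMod (b - 1)) = 2)
    (hds : 2 * b - 3 < (b.digits ((b - 1) * C - 1)).sum) :
    ¬ ∃ t ∈ mulPowSubOneClosure C b, t + (C - 1) = (b - 1) * (C * C - 2) := by
  rintro ⟨t, ht, heq⟩
  obtain ⟨s, hs⟩ := (mem_mulPowSubOneClosure_iff (by omega) (by omega)).mp ht
  have hKN := card_le_sum_map_pow (b := b) (by omega) s
  have hmod := natCast_sum_map_pow (b := b) (by omega) s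
  have hdig := Nat.digits_sum_sum_map_pow_le_card (b := b) (by omega) s
  set N := (s.map (b ^ ·)).sum
  set K := Multiset.card s
  have hM : (b - 1) * (C * C - 2) + 2 * (b - 1) = (b - 1) * (C * C) := by
    rw [mul_comm 2, ← mul_add, Nat.sub_add_cancel (by nlinarith)]
  have E : C * (N + 1) + (2 * b - 3) = (b - 1) * (C * C) + K := by
    rw [mul_add, mul_one]
    omega
  -- modulo `b - 1`, `E` reads `2 (N + 1) - 1 = K = N`
  obtain ⟨q, hq⟩ : b - 1 ∣ N + 1 := by
    rw [← ZMod.natCast_eq_zero_iff]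
    have E' := congrArg (Nat.cast : ℕ → ZMod (b - 1)) E
    push_cast [Nat.cast_sub (by omega : 3 ≤ 2 * b), ZMod.natCast_self, hCmod, hmod,
      natCast_eq_one_zmod_sub_one (by omega : 0 < b)] at E' ⊢
    linear_combination E'
  have hqC : q = C := by
    rw [hq, show 2 * b - 3 = 2 * (b - 1) - 1 by omega] at E
    exact eq_of_mul_mul_add_eq (by omega) hC (by omega) E
  subst hqC
  have hCN : q * (N + 1) = (b - 1) * (q * q) := by rw [hq]; ring
  rw [show N = (b - 1) * q - 1 by omega] at hdig
  omega

theorem mul_sub_mem_mulPowSubOneClosure {i j k : ℕ} (hb : 1 < b) (hC : C = b ^ i + b ^ j)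
    (hk2 : 2 ≤ k) (hkC : k ≤ C) : (b - 1) * (C * C - k) ∈ mulPowSubOneClosure C b := by
  set s₀ : Multiset ℕ := Multiset.replicate (b - 1) i + Multiset.replicate (b - 1) j
  have hsum₀ : (s₀.map (b ^ ·)).sum = (b - 1) * C := by simp [s₀, hC, mul_add]
  have hcard₀ : Multiset.card s₀ = (b - 1) * 2 := by
    simp only [s₀, Multiset.card_add, Multiset.card_replicate]
    ring
  obtain ⟨s, hsum, hcard⟩ := exists_card_eq_add_mul hb (k - 2) (s := s₀) (by
    rw [hsum₀, hcard₀, ← mul_add]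
    exact Nat.mul_le_mul_left _ (by omega))
  refine (mem_mulPowSubOneClosure_iff (by rw [hC]; positivity) (by omega)).mpr ⟨s, ?_⟩
  rw [hsum, hsum₀, hcard, hcard₀, ← mul_add, ← mul_add, Nat.add_sub_cancel' hk2,
    Nat.sub_add_cancel (by nlinarith)]
  ring

/-- `b - 1` is invertible modulo `C - 1 ≡ 1 (mod b - 1)`, so the multiples `(b - 1) * m` with
`m < C - 1` meet every residue class modulo `C - 1`. -/
theorem exists_mem_mulPowSubOneClosure_mod_eq {i j r : ℕ} (hb : 1 < b) (hC : C = b ^ i + b ^ j)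
    (hr : r < C - 1) :
    ∃ w ∈ mulPowSubOneClosure C b, w % (C - 1) = r ∧ w ≤ (b - 1) * (C * C - 2) := by
  set s₀ := C - 1
  have : NeZero s₀ := ⟨by omega⟩
  have hC1 : C = s₀ + 1 := by omega
  have hcop : Nat.Coprime (b - 1) s₀ := by
    refine ((ZMod.isUnit_iff_coprime s₀ (b - 1)).mp ?_).symm
    have h := congrArg (Nat.cast : ℕ → ZMod (b - 1)) (hC1.symm.trans hC)
    push_cast [natCast_eq_one_zmod_sub_one (by omega : 0 < b), one_pow] at h
    rw [add_right_cancel h]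
    exact isUnit_one
  set m := ((r : ZMod s₀) * ((b - 1 : ℕ) : ZMod s₀)⁻¹).val
  have hm : m < s₀ := ZMod.val_lt _
  refine ⟨(b - 1) * (C * C - (C - m)), mul_sub_mem_mulPowSubOneClosure hb hC (by omega) (by omega),
    ?_, Nat.mul_le_mul_left _ (by omega)⟩
  have hw : C * C - (C - m) = C * s₀ + m := by
    have : C * C = C * s₀ + C := by rw [hC1]; ring
    omega
  rw [hw, ← ZMod.val_natCast, ← ZMod.val_cast_of_lt hr]
  congr 1
  push_cast [ZMod.natCast_self, ZMod.natCast_zmod_val, m]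
  rw [mul_zero, zero_add, mul_left_comm, ZMod.coe_mul_inv_eq_one _ hcop, mul_one]

theorem isGreatest_aperySet_mulPowSubOneClosure {i j : ℕ} (hb : 2 ≤ b) (hC : C = b ^ i + b ^ j)
    (hds : 2 * b - 3 < (b.digits ((b - 1) * C - 1)).sum) :
    IsGreatest (aperySet (mulPowSubOneClosure C b) (C - 1)) ((b - 1) * (C * C - 2)) := by
  have hC2 : 2 ≤ C := by
    have := Nat.one_le_pow i b (by omega)
    have := Nat.one_le_pow j b (by omega)
    omega
  have hCmod : (C : ZMod (b - 1)) = 2 := by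
    rw [hC]
    push_cast [natCast_eq_one_zmod_sub_one (by omega : 0 < b), one_pow]
    norm_num
  have hs₀ : C - 1 ∈ mulPowSubOneClosure C b := AddSubmonoid.subset_closure ⟨0, by simp⟩
  exact ⟨⟨mul_sub_mem_mulPowSubOneClosure (by omega) hC le_rfl hC2,
      not_exists_add_sub_one_eq hb hC2 hCmod hds⟩,
    fun s => le_of_mem_aperySet hs₀ fun r => exists_mem_mulPowSubOneClosure_mod_eq (by omega) hC⟩

end MulPowSubOneClosure

theorem thabit_max_apery (n b : ℕ) (hn : 1 ≤ n) (hb : 2 ≤ b) :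
    IsGreatest
      {s : ℕ | s ∈ thabitSemigroup b n ∧
        ¬ ∃ t ∈ thabitSemigroup b n, t + ((b + 1) * b ^ n - 1) = s}
      ((b - 1) * ((b + 1) * b ^ (n + n) - 1)
        + (b - 1) * ((b + 1) * b ^ (n + (n + 1)) - 1)) := by
  have hM : (b - 1) * ((b + 1) * b ^ (n + n) - 1) + (b - 1) * ((b + 1) * b ^ (n + (n + 1)) - 1)
      = (b - 1) * ((b + 1) * b ^ n * ((b + 1) * b ^ n) - 2) := by
    rw [← mul_add]
    congr 1
    have h1 : 1 ≤ (b + 1) * b ^ (n + n) := Nat.one_le_iff_ne_zero.mpr (by positivity)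
    have h2 : 1 ≤ (b + 1) * b ^ (n + (n + 1)) := Nat.one_le_iff_ne_zero.mpr (by positivity)
    have h3 : (b + 1) * b ^ n * ((b + 1) * b ^ n)
        = (b + 1) * b ^ (n + n) + (b + 1) * b ^ (n + (n + 1)) := by ring
    omega
  have hds : 2 * b - 3 < (b.digits ((b - 1) * ((b + 1) * b ^ n) - 1)).sum := by
    rw [Nat.digits_sub_one_mul_add_one_mul_pow_sub_one hb]
    simp only [List.sum_append, List.sum_replicate, smul_eq_mul, List.sum_cons, List.sum_nil]
    have := Nat.mul_le_mul_right (b - 1) hn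
    omega
  rw [hM, thabitSemigroup_eq_mulPowSubOneClosure]
  exact isGreatest_aperySet_mulPowSubOneClosure (i := n) (j := n + 1) hb (by ring) hds
end

section
/- Let n and b be natural numbers with n ≥ 1 and b ≥ 2. Then the Frobenius number of T_b(n) is (b³ + b² − b − 1)·b^(2n) − (b+1)·b^n − 2b + 3; that is, this number is the greatest natural number that does not belong to T_b(n). -/
/-!
Write `A = (b + 1) bⁿ`, `B = (b - 1) A = (b² - 1) bⁿ`, `F` for the claimed Frobenius number and `s`
for the base-`b` digit sum. A sum of `k` generators `A b^{eᵢ} - 1` equals `A Q - k` with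
`Q = ∑ b^{eᵢ}`, and `Q` is a sum of exactly `k` powers of `b` iff `s(Q) ≤ k ≤ Q` and
`k ≡ Q [MOD b - 1]`. Putting `k = Q - (b - 1) j`, the semigroup consists of the numbers
`(A - 1) Q + (b - 1) j` with `s(Q) + (b - 1) j ≤ Q`.

For `Q = B + u`, subadditivity of `s` and `s(B) = 2 (b - 1)` allow every `j ≤ A - 2`. As
`A - 1 ≡ 1 [MOD b - 1]`, the coins `A - 1` and `b - 1` are coprime, so by Sylvester every
`N ≥ (A - 2)(b - 2)` is `(A - 1) u + (b - 1) j` with `j ≤ A - 2`; since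
`F + 1 = (A - 1) B + (A - 2)(b - 2)`, this covers every `m > F`.

Conversely, coprimality makes `F = (A - 1)(B - 1) + (A - 2)(b - 1)` the only decomposition of `F`
with `(b - 1) j ≤ Q`, and it is not admissible: `s(B - 1) = (n + 2)(b - 1) - 1 > 2 b - 3` once
`n ≥ 1`.
-/
namespace Nat

variable {b : ℕ}

section

open Finset

theorem digits_sum_add_sub_one_mul_sum_div (hb : 1 < b) {n K : ℕ} (hK : n < b ^ K) :
    (b.digits n).sum + (b - 1) * ∑ i ∈ range K, n / b ^ (i + 1) = n := by
  rcases eq_or_ne n 0 with rfl | hn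
  · simp
  have hlog : (log b n).succ ≤ K := log_lt_of_lt_pow hn hK
  have htail : ∑ i ∈ Ico (log b n).succ K, n / b ^ (i + 1) = 0 :=
    sum_eq_zero fun i hi => Nat.div_eq_of_lt <| (lt_pow_succ_log_self hb n).trans_le <|
      Nat.pow_le_pow_right (by omega) (by simp at hi; omega)
  rw [← sum_range_add_sum_Ico _ hlog, htail, add_zero,
    sub_one_mul_sum_log_div_pow_eq_sub_sum_digits]
  have := digit_sum_le b n
  omega

theorem digits_sum_add_le (hb : 1 < b) (x y : ℕ) :
    (b.digits (x + y)).sum ≤ (b.digits x).sum + (b.digits y).sum := by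
  have hK {n : ℕ} (hn : n ≤ x + y) : n < b ^ (x + y) := hn.trans_lt (Nat.lt_pow_self hb)
  have hx := digits_sum_add_sub_one_mul_sum_div hb (hK (le_add_right x y))
  have hy := digits_sum_add_sub_one_mul_sum_div hb (hK (le_add_left y x))
  have hxy := digits_sum_add_sub_one_mul_sum_div hb (hK le_rfl)
  have hdiv : ∑ i ∈ range (x + y), x / b ^ (i + 1) + ∑ i ∈ range (x + y), y / b ^ (i + 1) ≤
      ∑ i ∈ range (x + y), (x + y) / b ^ (i + 1) := by
    rw [← sum_add_distrib]
    exact sum_le_sum fun i _ => div_add_div_le_add_div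
  have := Nat.mul_le_mul_left (b - 1) hdiv
  rw [mul_add] at this
  omega

end

theorem digits_sum_add_base_mul (hb : 1 < b) {r : ℕ} (hr : r < b) (q : ℕ) :
    (b.digits (r + b * q)).sum = r + (b.digits q).sum := by
  rcases eq_or_ne r 0 with rfl | hr0
  · rcases eq_or_ne q 0 with rfl | hq0
    · simp
    · rw [digits_add b hb 0 q hr (Or.inr hq0), List.sum_cons]
  · rw [digits_add b hb r q hr (Or.inl hr0), List.sum_cons]

theorem digits_sum_of_lt (hb : 1 < b) {r : ℕ} (hr : r < b) : (b.digits r).sum = r := by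
  simpa using digits_sum_add_base_mul hb hr 0

theorem digits_sum_base_pow_mul (hb : 1 < b) (k m : ℕ) :
    (b.digits (b ^ k * m)).sum = (b.digits m).sum := by
  rcases eq_or_ne m 0 with rfl | hm
  · simp
  · simp [digits_base_pow_mul hb (Nat.pos_of_ne_zero hm)]

theorem digits_sum_base_pow (hb : 1 < b) (e : ℕ) : (b.digits (b ^ e)).sum = 1 := by
  simpa [digits_sum_of_lt hb hb] using digits_sum_base_pow_mul hb e 1

theorem digits_sum_base_pow_mul_add_pred (hb : 1 < b) (k m : ℕ) :
    (b.digits (b ^ k * m + (b ^ k - 1))).sum = (b.digits m).sum + k * (b - 1) := by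
  induction k with
  | zero => simp
  | succ k ih =>
    have hpos : 0 < b ^ k := Nat.pow_pos (by omega)
    have : b ^ (k + 1) * m + (b ^ (k + 1) - 1) = (b - 1) + b * (b ^ k * m + (b ^ k - 1)) := by
      zify [hpos, Nat.one_le_pow (k + 1) b (by omega), hb.le]
      ring
    rw [this, digits_sum_add_base_mul hb (by omega), ih]
    ring

theorem digits_sum_base_pow_mul_sq_sub_one (hb : 1 < b) (n : ℕ) :
    (b.digits (b ^ n * (b ^ 2 - 1))).sum = 2 * (b - 1) := by
  have := digits_sum_base_pow_mul_add_pred hb 2 0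
  rw [mul_zero, zero_add] at this
  rw [digits_sum_base_pow_mul hb, this]
  simp [mul_comm]

theorem digits_sum_base_pow_mul_sq_sub_one_sub_one (hb : 1 < b) (n : ℕ) :
    (b.digits (b ^ n * (b ^ 2 - 1) - 1)).sum + 1 = (n + 2) * (b - 1) := by
  obtain ⟨c, rfl⟩ : ∃ c, b = c + 2 := ⟨b - 2, by omega⟩
  have hpos : 0 < (c + 2) ^ n := Nat.pow_pos (by omega)
  have hsplit : (c + 2) ^ n * ((c + 2) ^ 2 - 1) - 1 =
      (c + 2) ^ n * (c + (c + 2) * (c + 1)) + ((c + 2) ^ n - 1) := by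
    have : (c + 2) ^ 2 - 1 = c + (c + 2) * (c + 1) + 1 := by ring_nf; omega
    rw [this, mul_add_one]
    omega
  rw [hsplit, digits_sum_base_pow_mul_add_pred hb, digits_sum_add_base_mul hb (by omega),
    digits_sum_of_lt hb (by omega)]
  show c + (c + 1) + n * (c + 1) + 1 = (n + 2) * (c + 1)
  ring

theorem exists_length_add_mul_eq_sum_map_pow (hb : 1 ≤ b) (l : List ℕ) :
    ∃ j, l.length + (b - 1) * j = (l.map (b ^ ·)).sum := by
  induction l with
  | nil => exact ⟨0, by simp⟩
  | cons e l ih =>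
    obtain ⟨j, hj⟩ := ih
    obtain ⟨c, hc⟩ := sub_one_dvd_pow_sub_one b e
    have := Nat.one_le_pow e b hb
    refine ⟨c + j, ?_⟩
    simp only [List.length_cons, List.map_cons, List.sum_cons, mul_add]
    omega

theorem digits_sum_sum_map_pow_le_length (hb : 1 < b) (l : List ℕ) :
    (b.digits (l.map (b ^ ·)).sum).sum ≤ l.length := by
  induction l with
  | nil => simp
  | cons e l ih =>
    simp only [List.length_cons, List.map_cons, List.sum_cons]
    have := digits_sum_add_le hb (b ^ e) (l.map (b ^ ·)).sum
    rw [digits_sum_base_pow hb] at this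
    omega

theorem exists_list_length_eq_digits_sum (b Q : ℕ) :
    ∃ l : List ℕ, l.length = (b.digits Q).sum ∧ (l.map (b ^ ·)).sum = Q := by
  suffices ∀ L : List ℕ, ∃ l : List ℕ, l.length = L.sum ∧ (l.map (b ^ ·)).sum = ofDigits b L by
    simpa [ofDigits_digits] using this (b.digits Q)
  intro L
  induction L with
  | nil => exact ⟨[], by simp [ofDigits]⟩
  | cons d L ih =>
    obtain ⟨l, hl, hs⟩ := ih
    refine ⟨List.replicate d 0 ++ l.map (· + 1), by simp [hl], ?_⟩
    simp [ofDigits_cons, ← hs, pow_succ', List.sum_map_mul_left, Function.comp_def]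

theorem exists_list_length_eq_add_pred (hb : 0 < b) {l : List ℕ}
    (hl : l.length < (l.map (b ^ ·)).sum) :
    ∃ l' : List ℕ, l'.length = l.length + (b - 1) ∧
      (l'.map (b ^ ·)).sum = (l.map (b ^ ·)).sum := by
  obtain ⟨e, he, he0⟩ : ∃ e ∈ l, e ≠ 0 := by
    by_contra! h
    have : l.map (b ^ ·) = List.replicate l.length 1 :=
      List.eq_replicate_iff.mpr ⟨by simp, fun x hx => by
        obtain ⟨e, he, rfl⟩ := List.mem_map.mp hx
        simp [h e he]⟩
    simp [this] at hl
  refine ⟨List.replicate b (e - 1) ++ l.erase e, ?_, ?_⟩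
  · rw [List.length_append, List.length_replicate, List.length_erase_of_mem he]
    have := List.length_pos_of_mem he
    omega
  · have hsplit := ((List.perm_cons_erase he).map (b ^ ·)).sum_eq
    rw [List.map_cons, List.sum_cons] at hsplit
    rw [hsplit, List.map_append, List.sum_append, List.map_replicate, List.sum_replicate,
      smul_eq_mul, mul_pow_sub_one he0]

theorem exists_list_length_eq_digits_sum_add_mul (hb : 1 < b) {Q t : ℕ}
    (h : (b.digits Q).sum + (b - 1) * t ≤ Q) :
    ∃ l : List ℕ, l.length = (b.digits Q).sum + (b - 1) * t ∧ (l.map (b ^ ·)).sum = Q := by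
  induction t with
  | zero => simpa using exists_list_length_eq_digits_sum b Q
  | succ t ih =>
    rw [mul_add_one, ← add_assoc] at h ⊢
    obtain ⟨l, hl, hs⟩ := ih (by omega)
    obtain ⟨l', hl', hs'⟩ := exists_list_length_eq_add_pred (b := b) (by omega) (l := l) (by omega)
    exact ⟨l', by rw [hl', hl], hs'.trans hs⟩

theorem exists_list_pow_sum_iff (hb : 1 < b) {k Q : ℕ} :
    (∃ l : List ℕ, l.length = k ∧ (l.map (b ^ ·)).sum = Q) ↔
      (b.digits Q).sum ≤ k ∧ ∃ j, k + (b - 1) * j = Q := by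
  constructor
  · rintro ⟨l, rfl, rfl⟩
    exact ⟨digits_sum_sum_map_pow_le_length hb l, exists_length_add_mul_eq_sum_map_pow hb.le l⟩
  · rintro ⟨hk, j, hQ⟩
    obtain ⟨i, hi⟩ : ∃ i, (b.digits Q).sum + (b - 1) * i = Q :=
      ⟨_, digits_sum_add_sub_one_mul_sum_div hb (Nat.lt_pow_self hb)⟩
    have hji : j ≤ i := by
      by_contra! h
      have := Nat.mul_lt_mul_of_pos_left h (Nat.sub_pos_of_lt hb)
      omega
    have hk : k = (b.digits Q).sum + (b - 1) * (i - j) := by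
      rw [Nat.mul_sub]
      have := Nat.mul_le_mul_left (b - 1) hji
      omega
    rw [hk]
    exact exists_list_length_eq_digits_sum_add_mul hb (by omega)

theorem exists_add_mul_eq_of_coprime_of_mul_pred_le {p q N : ℕ} (hpq : p.Coprime q)
    (hp : 0 < p) (hN : (p - 1) * (q - 1) ≤ N) : ∃ u j, j < p ∧ u * p + j * q = N := by
  obtain ⟨a, c, h⟩ := exists_add_mul_eq_of_gcd_dvd_of_mul_pred_le p q N
    (by simp [hpq.gcd_eq_one]) (by simpa using hN)
  refine ⟨a + c / p * q, c % p, Nat.mod_lt c hp, ?_⟩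
  calc (a + c / p * q) * p + c % p * q = a * p + (p * (c / p) + c % p) * q := by ring
    _ = N := by rw [Nat.div_add_mod, h]

theorem coprime_succ_mul_pow_sub_one (hb : 0 < b) (n : ℕ) :
    ((b + 1) * b ^ n - 1).Coprime (b - 1) := by
  have hb1 : b ≡ 1 [MOD b - 1] := Nat.modEq_sub hb
  have hA : (b + 1) * b ^ n ≡ 2 [MOD b - 1] := by simpa using (hb1.add_right 1).mul (hb1.pow n)
  have hA1 : (b + 1) * b ^ n - 1 ≡ 1 [MOD b - 1] := by
    refine Nat.ModEq.add_right_cancel' 1 ?_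
    rwa [Nat.sub_add_cancel (Nat.one_le_iff_ne_zero.mpr (by positivity))]
  rw [Nat.Coprime, hA1.gcd_eq, Nat.gcd_one_left]

theorem pow_mul_sq_sub_one (b n : ℕ) : b ^ n * (b ^ 2 - 1) = (b - 1) * ((b + 1) * b ^ n) := by
  rw [show b ^ 2 - 1 = (b + 1) * (b - 1) by simpa using Nat.sq_sub_sq b 1]
  ring

end Nat

theorem Int.eq_of_sub_one_mul_add_mul_eq {a c Q j : ℤ} (hcop : IsCoprime (a - 1) c)
    (ha : 2 ≤ a) (hc : 0 ≤ c) (hj : 0 ≤ j) (hQj : c * j ≤ Q)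
    (h : (a - 1) * Q + c * j = (a - 1) * (c * a - 1) + c * (a - 2)) :
    Q = c * a - 1 ∧ j = a - 2 := by
  obtain ⟨t, ht⟩ : a - 1 ∣ a - 2 - j :=
    hcop.dvd_of_dvd_mul_left ⟨Q - (c * a - 1), by linear_combination -h⟩
  have hQt : Q = c * a - 1 + c * t := by
    have : (a - 1) * (Q - (c * a - 1)) = (a - 1) * (c * t) := by linear_combination h + c * ht
    linarith [mul_left_cancel₀ (show a - 1 ≠ 0 by omega) this]
  obtain rfl : t = 0 := by
    rcases lt_trichotomy t 0 with h | h | h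
    · have hj' : j = a - 2 - (a - 1) * t := by linarith
      rw [hj', hQt] at hQj
      nlinarith [mul_nonneg hc (mul_nonneg (show 0 ≤ a by omega) (show 0 ≤ -t - 1 by omega))]
    · exact h
    · nlinarith [mul_nonneg (show 0 ≤ a - 1 by omega) (show 0 ≤ t - 1 by omega)]
  constructor <;> linarith

section

variable {b n m : ℕ}

theorem mem_thabitSemigroup_iff_exists_list (hb : 0 < b) :
    m ∈ thabitSemigroup b n ↔
      ∃ l : List ℕ, m + l.length = (b + 1) * b ^ n * (l.map (b ^ ·)).sum := by
  constructor
  · intro h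
    induction h using AddSubmonoid.closure_induction with
    | mem x hx =>
      obtain ⟨i, rfl⟩ := hx
      have : 0 < (b + 1) * b ^ (n + i) := by positivity
      refine ⟨[i], ?_⟩
      simp only [List.length_singleton, List.map_cons, List.map_nil, List.sum_singleton]
      rw [mul_assoc, ← pow_add]
      omega
    | zero => exact ⟨[], by simp⟩
    | add x y _ _ ihx ihy =>
      obtain ⟨l₁, h₁⟩ := ihx
      obtain ⟨l₂, h₂⟩ := ihy
      refine ⟨l₁ ++ l₂, ?_⟩
      simp only [List.length_append, List.map_append, List.sum_append, mul_add]
      omega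
  · rintro ⟨l, hl⟩
    induction l generalizing m with
    | nil => simp_all
    | cons e l ih =>
      simp only [List.length_cons, List.map_cons, List.sum_cons, mul_add] at hl
      obtain ⟨j, hj⟩ := Nat.exists_length_add_mul_eq_sum_map_pow hb l
      have hS : l.length ≤ (b + 1) * b ^ n * (l.map (b ^ ·)).sum :=
        (Nat.le.intro hj).trans (Nat.le_mul_of_pos_left _ (by positivity))
      have hgen : (b + 1) * b ^ (n + e) - 1 ∈ thabitSemigroup b n :=
        AddSubmonoid.subset_closure ⟨e, rfl⟩
      have hpos : 0 < (b + 1) * b ^ (n + e) := by positivity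
      convert add_mem hgen (ih (m := (b + 1) * b ^ n * (l.map (b ^ ·)).sum - l.length) (by omega))
        using 1
      rw [pow_add, ← mul_assoc] at hpos ⊢
      omega

theorem mem_thabitSemigroup_iff (hb : 1 < b) :
    m ∈ thabitSemigroup b n ↔ ∃ Q j, (b.digits Q).sum + (b - 1) * j ≤ Q ∧
      m = ((b + 1) * b ^ n - 1) * Q + (b - 1) * j := by
  rw [mem_thabitSemigroup_iff_exists_list (by omega)]
  constructor
  · rintro ⟨l, hl⟩
    obtain ⟨hs, j, hj⟩ := (Nat.exists_list_pow_sum_iff hb).mp ⟨l, rfl, rfl⟩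
    refine ⟨(l.map (b ^ ·)).sum, j, by omega, ?_⟩
    have := Nat.le_mul_of_pos_left (l.map (b ^ ·)).sum (show 0 < (b + 1) * b ^ n by positivity)
    rw [Nat.sub_one_mul]
    omega
  · rintro ⟨Q, j, hQ, rfl⟩
    obtain ⟨l, hl, hs⟩ := (Nat.exists_list_pow_sum_iff hb (k := Q - (b - 1) * j) (Q := Q)).mpr
      ⟨by omega, j, by omega⟩
    have := Nat.le_mul_of_pos_left Q (show 0 < (b + 1) * b ^ n by positivity)
    refine ⟨l, ?_⟩
    rw [hl, hs, Nat.sub_one_mul]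
    omega

def thabitFrobenius (b n : ℕ) : ℕ :=
  (b ^ 3 + b ^ 2 - b - 1) * b ^ (2 * n) - (b + 1) * b ^ n - 2 * b + 3

theorem cast_thabitFrobenius (hb : 1 < b) :
    (thabitFrobenius b n : ℤ) =
      (b - 1) * (((b + 1) * b ^ n : ℕ) : ℤ) ^ 2 - ((b + 1) * b ^ n : ℕ) - 2 * b + 3 := by
  have hcoef : b ^ 3 + b ^ 2 - b - 1 = (b - 1) * (b + 1) ^ 2 := by
    obtain ⟨c, rfl⟩ : ∃ c, b = c + 1 := ⟨b - 1, by omega⟩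
    simp only [Nat.add_sub_cancel]
    ring_nf
    omega
  have hA : b + 1 ≤ (b + 1) * b ^ n := Nat.le_mul_of_pos_right _ (Nat.pow_pos (by omega))
  have hle : (b + 1) * b ^ n + 2 * b ≤ (b - 1) * ((b + 1) * b ^ n) ^ 2 := by
    have : 1 ≤ b - 1 := by omega
    nlinarith
  rw [thabitFrobenius, hcoef, pow_mul', mul_assoc, ← mul_pow, Nat.sub_sub, Nat.cast_add,
    Nat.cast_sub hle]
  push_cast [Nat.cast_sub hb.le]
  ring

theorem thabitFrobenius_not_mem (hn : 1 ≤ n) (hb : 1 < b) :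
    thabitFrobenius b n ∉ thabitSemigroup b n := by
  rw [mem_thabitSemigroup_iff hb]
  rintro ⟨Q, j, hQ, hF⟩
  have hA : b + 1 ≤ (b + 1) * b ^ n := Nat.le_mul_of_pos_right _ (Nat.pow_pos (by omega))
  have hcop := Nat.isCoprime_iff_coprime.mpr
    (Nat.coprime_succ_mul_pow_sub_one (show 0 < b by omega) n)
  have hFZ := cast_thabitFrobenius (n := n) hb
  rw [hF] at hFZ
  have hBA := Nat.pow_mul_sq_sub_one b n
  have hsB := Nat.digits_sum_base_pow_mul_sq_sub_one_sub_one hb n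
  generalize b ^ n * (b ^ 2 - 1) = B at hBA hsB
  generalize (b + 1) * b ^ n = A at hA hBA hFZ hcop
  push_cast [Nat.cast_sub (show 1 ≤ A by omega), Nat.cast_sub hb.le] at hcop hFZ
  have hQj := (Nat.cast_le (α := ℤ)).mpr (show (b - 1) * j ≤ Q by omega)
  push_cast [Nat.cast_sub hb.le] at hQj
  obtain ⟨hQB, hjA⟩ := Int.eq_of_sub_one_mul_add_mul_eq hcop (by omega) (by omega) (by positivity)
    hQj (by linear_combination hFZ)
  have hQB' : Q + 1 = B := by
    zify [hBA, hb.le]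
    linarith
  rw [← hQB', Nat.add_sub_cancel] at hsB
  zify [hb.le] at hQ hsB
  rw [hjA, hQB] at hQ
  have : (1 : ℤ) ≤ n := by exact_mod_cast hn
  have : (2 : ℤ) ≤ b := by exact_mod_cast hb
  nlinarith

theorem sub_one_mul_add_mul_mem_thabitSemigroup (hb : 1 < b) {u j : ℕ}
    (hj : j < (b + 1) * b ^ n - 1) :
    ((b + 1) * b ^ n - 1) * (b ^ n * (b ^ 2 - 1) + u) + (b - 1) * j ∈ thabitSemigroup b n := by
  rw [mem_thabitSemigroup_iff hb]
  refine ⟨_, j, ?_, rfl⟩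
  calc (b.digits (b ^ n * (b ^ 2 - 1) + u)).sum + (b - 1) * j
      ≤ (b.digits (b ^ n * (b ^ 2 - 1))).sum + (b.digits u).sum + (b - 1) * ((b + 1) * b ^ n - 2) :=
        add_le_add (Nat.digits_sum_add_le hb _ u) (Nat.mul_le_mul_left _ (by omega))
    _ ≤ 2 * (b - 1) + u + (b - 1) * ((b + 1) * b ^ n - 2) := by
        rw [Nat.digits_sum_base_pow_mul_sq_sub_one hb]
        have := Nat.digit_sum_le b u
        omega
    _ = b ^ n * (b ^ 2 - 1) + u := by
        have hA : b + 1 ≤ (b + 1) * b ^ n := Nat.le_mul_of_pos_right _ (Nat.pow_pos (by omega))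
        rw [Nat.pow_mul_sq_sub_one]
        zify [hb.le, (show 2 ≤ (b + 1) * b ^ n by omega)]
        ring

theorem mem_thabitSemigroup_of_thabitFrobenius_lt (hb : 1 < b) (hm : thabitFrobenius b n < m) :
    m ∈ thabitSemigroup b n := by
  have hA : b + 1 ≤ (b + 1) * b ^ n := Nat.le_mul_of_pos_right _ (Nat.pow_pos (by omega))
  have hcop := Nat.coprime_succ_mul_pow_sub_one (show 0 < b by omega) n
  have hFZ := cast_thabitFrobenius (n := n) hb
  have hmZ : (thabitFrobenius b n : ℤ) + 1 ≤ m := by exact_mod_cast hm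
  have hle :
      ((b + 1) * b ^ n - 1) * (b ^ n * (b ^ 2 - 1)) + ((b + 1) * b ^ n - 2) * (b - 2) ≤ m := by
    rw [Nat.pow_mul_sq_sub_one]
    generalize (b + 1) * b ^ n = A at hA hFZ
    zify [(show 2 ≤ b by omega), (show 2 ≤ A by omega), (show 1 ≤ A by omega)]
    push_cast [Nat.cast_sub hb.le]
    nlinarith
  obtain ⟨u, j, hj, huj⟩ := Nat.exists_add_mul_eq_of_coprime_of_mul_pred_le hcop (by omega)
    (N := m - ((b + 1) * b ^ n - 1) * (b ^ n * (b ^ 2 - 1)))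
    (show ((b + 1) * b ^ n - 2) * (b - 2) ≤ _ by omega)
  convert sub_one_mul_add_mul_mem_thabitSemigroup hb hj using 1
  rw [mul_add, mul_comm _ u, mul_comm (b - 1) j]
  omega

end

theorem thabit_frobenius (n b : ℕ) (hn : 1 ≤ n) (hb : 2 ≤ b) :
    IsGreatest {m : ℕ | m ∉ thabitSemigroup b n}
      ((b ^ 3 + b ^ 2 - b - 1) * b ^ (2 * n) - (b + 1) * b ^ n - 2 * b + 3) :=
  ⟨thabitFrobenius_not_mem hn hb, fun _ hm =>
    not_lt.mp fun h => hm (mem_thabitSemigroup_of_thabitFrobenius_lt hb h)⟩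
end

section
/- Let n and b be natural numbers with n ≥ 2 and b ≥ 2. For every i ∈ {1,…,n−1} and every k ∈ {1,…,b−1}, the number of tuples (t_1,…,t_(n+1)) ∈ R_b(n) with t_i = k equals (b+1)·(b^(n−1) − b^(n−i−1)). -/
/-- `R_b(n)`: tuples `(t_1,…,t_(n+1))` with entries in `{0,…,b}` (encoded as functions
`ℕ → ℕ` supported on `{1,…,n+1}`) such that: `t_(n+1) ≤ b−1`; if `t_j = b` then `t_i = 0`
for all `i < j`; if `t_(n+1) = b−1` then `t_n ≤ b−1`; and if `t_n = t_(n+1) = b−1` then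
`t_1 = ⋯ = t_(n−1) = 0`. -/
def Rb (b n : ℕ) (t : ℕ → ℕ) : Prop :=
  (∀ j, t j ≤ b) ∧
  (∀ j, j ∉ Finset.Icc 1 (n + 1) → t j = 0) ∧
  t (n + 1) ≤ b - 1 ∧
  (∀ j, t j = b → ∀ i < j, t i = 0) ∧
  (t (n + 1) = b - 1 → t n ≤ b - 1) ∧
  (t n = b - 1 → t (n + 1) = b - 1 → ∀ i, 1 ≤ i → i ≤ n - 1 → t i = 0)

/-!
Since `0 < t_i = k < b`, no entry after position `i` can equal `b` (it would force `t_i = 0`),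
and `t_n = t_(n+1) = b - 1` is excluded. Hence such a tuple splits into its entries before `i`,
an arbitrary tuple of length `i - 1` obeying the first two conditions of `R_b(n)`, and its
entries after `i`, an arbitrary element of `{0,…,b-1}^(n+1-i)` that does not end in
`(b-1, b-1)`. The first kind is counted by `1 + b + ⋯ + b^(i-1)` (no entry `b`, or the position
of the unique one), the second by `b^(n+1-i) - b^(n-1-i)`, and the product equals
`(b+1)(b^(n-1) - b^(n-i-1))`.
-/

open Finset

def boxOn {ι α : Type*} (s : Finset ι) (A : Finset α) (c : ι → α) : Set (ι → α) :=
  {t | (∀ j ∈ s, t j ∈ A) ∧ ∀ j ∉ s, t j = c j}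

section BoxOn

variable {ι α : Type*} [DecidableEq ι] (s : Finset ι) (A : Finset α) (c : ι → α)

theorem boxOn_eq_image :
    boxOn s A c =
      (fun (g : ∀ j ∈ s, α) j => if h : j ∈ s then g j h else c j) '' ↑(s.pi fun _ => A) := by
  ext t
  simp only [boxOn, Set.mem_image, mem_coe, mem_pi]
  constructor
  · rintro ⟨hA, hc⟩
    refine ⟨fun j _ => t j, hA, funext fun j => ?_⟩
    split_ifs with hj
    · rfl
    · exact (hc j hj).symm
  · rintro ⟨g, hg, rfl⟩
    exact ⟨fun j hj => by simpa [hj] using hg j hj, fun j hj => by simp [hj]⟩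

theorem boxOn_finite : (boxOn s A c).Finite := by
  rw [boxOn_eq_image]
  exact (s.pi _).finite_toSet.image _

theorem ncard_boxOn : (boxOn s A c).ncard = #A ^ #s := by
  rw [boxOn_eq_image, Set.ncard_image_of_injective, Set.ncard_coe_finset, card_pi, prod_const]
  intro g g' h
  funext j hj
  simpa [hj] using congrFun h j

end BoxOn

theorem ncard_setOf_indicator_mem_and {ι M : Type*} [Zero M] (s : Set ι) {A B : Set (ι → M)}
    (hA : ∀ p ∈ A, ∀ j ∉ s, p j = 0) (hB : ∀ q ∈ B, ∀ j ∈ s, q j = 0) :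
    {t | s.indicator t ∈ A ∧ sᶜ.indicator t ∈ B}.ncard = A.ncard * B.ncard := by
  classical
  rw [← Set.ncard_prod]
  refine Set.ncard_congr (fun t _ => (s.indicator t, sᶜ.indicator t)) (fun _ ht => ht) ?_ ?_
  · intro t t' _ _ h
    funext j
    by_cases hj : j ∈ s
    · simpa [hj] using congrFun (Prod.ext_iff.1 h).1 j
    · simpa [hj] using congrFun (Prod.ext_iff.1 h).2 j
  · rintro ⟨p, q⟩ ⟨hp, hq⟩
    have hp' : s.indicator (s.piecewise p q) = p := funext fun j => by
      by_cases hj : j ∈ s <;> simp [hj, hA p hp]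
    have hq' : sᶜ.indicator (s.piecewise p q) = q := funext fun j => by
      by_cases hj : j ∈ s <;> simp [hj, hB q hq]
    exact ⟨s.piecewise p q, ⟨hp'.symm ▸ hp, hq'.symm ▸ hq⟩, by rw [hp', hq']⟩

def prefixSet (b m : ℕ) : Set (ℕ → ℕ) :=
  {p | (∀ j, p j ≤ b) ∧ (∀ j, j ∉ Icc 1 m → p j = 0) ∧ ∀ j, p j = b → ∀ l < j, p l = 0}

theorem prefixSet_subset_boxOn (b m : ℕ) : prefixSet b m ⊆ boxOn (Icc 1 m) (range (b + 1)) 0 :=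
  fun _ ⟨hle, hsupp, _⟩ => ⟨fun j _ => mem_range.2 (Nat.lt_succ_of_le (hle j)), hsupp⟩

theorem prefixSet_finite (b m : ℕ) : (prefixSet b m).Finite :=
  (boxOn_finite _ _ _).subset (prefixSet_subset_boxOn b m)

theorem prefixSet_zero (b : ℕ) : prefixSet b 0 = {0} := by
  ext p
  simp only [prefixSet, Set.mem_ofPred_eq, Set.mem_singleton_iff, funext_iff, Pi.zero_apply]
  constructor
  · rintro ⟨-, hsupp, -⟩ j
    exact hsupp j (by simp)
  · intro h
    exact ⟨fun j => by simp [h], fun j _ => h j, fun _ _ l _ => h l⟩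

theorem prefixSet_succ (b m : ℕ) :
    prefixSet b (m + 1) = insert (Pi.single (m + 1) b)
      {p | (Set.Iio (m + 1)).indicator p ∈ prefixSet b m ∧
        (Set.Iio (m + 1))ᶜ.indicator p ∈ boxOn {m + 1} (range b) 0} := by
  ext p
  simp only [prefixSet, boxOn, Set.mem_insert_iff, Set.mem_ofPred_eq, Set.indicator_apply,
    Set.mem_Iio, Set.mem_compl_iff, mem_Icc, mem_singleton, mem_range, Pi.zero_apply,
    funext_iff, Pi.single_apply, forall_eq, not_lt]
  constructor
  · rintro ⟨hle, hsupp, hzero⟩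
    by_cases hlast : p (m + 1) = b
    · left
      intro j
      have := hzero (m + 1) hlast j
      grind
    · right
      grind
  · rintro (h | ⟨⟨hle, hsupp, hzero⟩, hlast, hrest⟩) <;> grind

theorem ncard_prefixSet (b m : ℕ) : (prefixSet b m).ncard = ∑ j ∈ range (m + 1), b ^ j := by
  induction m with
  | zero => simp [prefixSet_zero]
  | succ m ih =>
    have hnotMem : Pi.single (m + 1) b ∉ {p | (Set.Iio (m + 1)).indicator p ∈ prefixSet b m ∧
        (Set.Iio (m + 1))ᶜ.indicator p ∈ boxOn {m + 1} (range b) 0} :=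
      fun ⟨_, hbox, _⟩ => by simpa using hbox (m + 1) (mem_singleton_self _)
    rw [prefixSet_succ, Set.ncard_insert_of_notMem hnotMem ((prefixSet_finite b (m + 1)).subset
      (prefixSet_succ b m ▸ Set.subset_insert _ _)), ncard_setOf_indicator_mem_and, ih,
      ncard_boxOn, card_range, card_singleton, pow_one, geom_sum_succ (n := m + 1), mul_comm]
    · exact fun p ⟨_, hsupp, _⟩ j hj =>
        hsupp j (by rw [Set.mem_Iio, not_lt] at hj; rw [mem_Icc]; omega)
    · exact fun q ⟨_, hq⟩ j hj => hq j (by rw [Set.mem_Iio] at hj; rw [mem_singleton]; omega)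

def tailSet (b n i k : ℕ) : Set (ℕ → ℕ) :=
  boxOn (Ioc i (n + 1)) (range b) (Pi.single i k) \ {q | q n = b - 1 ∧ q (n + 1) = b - 1}

section Tail

variable {b n i : ℕ} (k : ℕ)

theorem boxOn_inter_corner (hb : 0 < b) (hin : i < n) :
    boxOn (Ioc i (n + 1)) (range b) (Pi.single i k) ∩ {q | q n = b - 1 ∧ q (n + 1) = b - 1} =
      boxOn (Ioo i n) (range b)
        (Function.update (Function.update (Pi.single i k) n (b - 1)) (n + 1) (b - 1)) := by
  ext q
  simp only [boxOn, Set.mem_inter_iff, Set.mem_ofPred_eq, mem_Ioc, mem_Ioo, mem_range,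
    Function.update_apply, Pi.single_apply]
  grind

theorem ncard_tailSet (hb : 0 < b) (hin : i < n) :
    (tailSet b n i k).ncard = b ^ (n + 1 - i) - b ^ (n - i - 1) := by
  rw [tailSet, ← Set.sdiff_self_inter,
    Set.ncard_sdiff Set.inter_subset_left ((boxOn_finite _ _ _).inter_of_left _),
    boxOn_inter_corner k hb hin, ncard_boxOn, ncard_boxOn, card_range, Nat.card_Ioc,
    Nat.card_Ioo]

end Tail

theorem setOf_Rb_and_eq {b n i k : ℕ} (hi : 1 ≤ i) (hin : i < n) (hk : 0 < k) (hkb : k < b) :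
    {t | Rb b n t ∧ t i = k} = {t | (Set.Iio i).indicator t ∈ prefixSet b (i - 1) ∧
      (Set.Iio i)ᶜ.indicator t ∈ tailSet b n i k} := by
  ext t
  simp only [Rb, prefixSet, tailSet, boxOn, Set.mem_ofPred_eq, Set.mem_sdiff, Set.indicator_apply,
    Set.mem_Iio, Set.mem_compl_iff, mem_Icc, mem_Ioc, mem_range, Pi.single_apply, not_lt]
  constructor
  · rintro ⟨⟨hle, hsupp, hlast, hzero, hpen, hcorner⟩, rfl⟩
    have hlt : ∀ j, i < j → t j < b := fun j hj =>
      lt_of_le_of_ne (hle j) fun h => by have := hzero j h i hj; omega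
    grind
  · rintro ⟨⟨hle, hsupp, hzero⟩, ⟨hfree, hfixed⟩, hcorner⟩
    have hlow : ∀ j < i, t j ≤ b := fun j hj => by simpa [hj] using hle j
    have hzero_low : ∀ j < i, t j = b → ∀ l < j, t l = 0 := fun j hj h l hl => by
      simpa [hl.trans hj] using hzero j (by simpa [hj]) l hl
    have h0 : t 0 = 0 := by simpa [show 0 < i by omega] using hsupp 0 (by omega)
    have hti : t i = k := by simpa using hfixed i (by omega)
    have hhigh : ∀ j, i < j → j ≤ n + 1 → t j < b := fun j h1 h2 => by
      simpa [h1.le] using hfree j ⟨h1, h2⟩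
    have hout : ∀ j, n + 1 < j → t j = 0 := fun j hj => by
      simpa [show i ≤ j by omega, show j ≠ i by omega] using hfixed j (by omega)
    have hnot_corner : ¬(t n = b - 1 ∧ t (n + 1) = b - 1) := by
      simpa [hin.le, (hin.trans (Nat.lt_succ_self n)).le] using hcorner
    clear hle hzero hsupp hfree hfixed hcorner
    grind

theorem geom_sum_mul_pow_sub_pow {b i n : ℕ} (hb : 0 < b) (hin : i < n) :
    (∑ j ∈ range i, b ^ j) * (b ^ (n + 1 - i) - b ^ (n - i - 1)) =
      (b + 1) * (b ^ (n - 1) - b ^ (n - i - 1)) := by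
  obtain ⟨e, rfl⟩ : ∃ e, n = i + e + 1 := ⟨n - i - 1, by omega⟩
  rw [show i + e + 1 + 1 - i = e + 2 by omega, show i + e + 1 - i - 1 = e by omega,
    Nat.add_sub_cancel]
  have h2 : b ^ e ≤ b ^ (e + 2) := Nat.pow_le_pow_right hb (by omega)
  have hi : b ^ e ≤ b ^ (i + e) := Nat.pow_le_pow_right hb (by omega)
  zify [h2, hi]
  linear_combination ((b : ℤ) + 1) * (b : ℤ) ^ e * geom_sum_mul (b : ℤ) i

theorem Rb_count_fixed_middle_general (n b : ℕ)
    (i k : ℕ) (hi1 : 1 ≤ i) (hi2 : i ≤ n - 1) (hk1 : 1 ≤ k) (hk2 : k ≤ b - 1) :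
    Set.ncard {t : ℕ → ℕ | Rb b n t ∧ t i = k}
      = (b + 1) * (b ^ (n - 1) - b ^ (n - i - 1)) := by
  have hin : i < n := by omega
  have hb : 0 < b := by omega
  rw [setOf_Rb_and_eq hi1 hin hk1 (by omega), ncard_setOf_indicator_mem_and, ncard_prefixSet,
    Nat.sub_add_cancel hi1, ncard_tailSet k hb hin, geom_sum_mul_pow_sub_pow hb hin]
  · exact fun p ⟨_, hsupp, _⟩ j hj =>
      hsupp j (by rw [Set.mem_Iio, not_lt] at hj; rw [mem_Icc]; omega)
  · exact fun q ⟨⟨_, hfixed⟩, _⟩ j hj => by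
      rw [Set.mem_Iio] at hj
      simpa [hj.ne] using hfixed j (by rw [mem_Ioc]; omega)

theorem Rb_count_fixed_middle (n b : ℕ) (hn : 2 ≤ n) (hb : 2 ≤ b)
    (i k : ℕ) (hi1 : 1 ≤ i) (hi2 : i ≤ n - 1) (hk1 : 1 ≤ k) (hk2 : k ≤ b - 1) :
    Set.ncard {t : ℕ → ℕ | Rb b n t ∧ t i = k}
      = (b + 1) * (b ^ (n - 1) - b ^ (n - i - 1)) :=
  Rb_count_fixed_middle_general n b i k hi1 hi2 hk1 hk2
end

section
/- Let n and b be natural numbers with n ≥ 2 and b ≥ 2. Then for every k ∈ {1,…,b−2}, the number of tuples (t_1,…,t_(n+1)) ∈ R_b(n) with t_n = k equals (b^(n+1) − b)/(b−1), and the number of tuples (t_1,…,t_(n+1)) ∈ R_b(n) with t_n = b−1 equals b^n. -/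
/-!
A tuple of `R_b(n)` with `t_n < b` splits into a word `t_1 ⋯ t_(n-1)` of `P_b(n-1)` and its
last two letters, where `P_b(m)` is the set of words of length `m` over `{0,…,b}` in which
a letter `b` is preceded only by zeros. Erasing a last letter `c < b` maps the words of
`P_b(m+1)` ending in `c` bijectively onto `P_b(m)`, and the only word ending in `b` is `0⋯0b`,
so `|P_b(m)| = 1 + b + ⋯ + b^m`. For `t_n = k ≤ b-2` the last letter ranges freely over
`{0,…,b-1}`, giving `b·|P_b(n-1)| = (b^(n+1) - b)/(b - 1)` tuples; for `t_n = b-1`, the last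
letter `b-1` forces the prefix to vanish, giving `(b-1)·|P_b(n-1)| + 1 = b^n` tuples.
-/

open Function Set

section UpdateImage

variable {α β : Type*} [DecidableEq α] {S S' : Set (α → β)} {C C' : Set β} {p : α} {z : β}

theorem mem_image2_update_iff (hS : ∀ s ∈ S, s p = z) {t : α → β} :
    t ∈ image2 (update · p ·) S C ↔ t p ∈ C ∧ update t p z ∈ S := by
  constructor
  · rintro ⟨s, hs, c, hc, rfl⟩
    dsimp only
    rw [update_self, update_idem, ← hS s hs, update_eq_self]
    exact ⟨hc, hs⟩
  · rintro ⟨hc, hs⟩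
    exact ⟨_, hs, _, hc, by dsimp only; rw [update_idem, update_eq_self]⟩

theorem encard_image2_update (hS : ∀ s ∈ S, s p = z) :
    (image2 (update · p ·) S C).encard = S.encard * C.encard := by
  rw [← image_prod, InjOn.encard_image, encard_prod]
  rintro ⟨s, c⟩ ⟨hs, -⟩ ⟨s', c'⟩ ⟨hs', -⟩ h
  have hc : c = c' := by simpa using congr_fun h p
  have hs : s = s' := by
    rw [← update_eq_self p s, ← update_eq_self p s', hS s hs, hS s' hs']
    simpa [update_idem] using congr_arg (update · p z) h
  rw [hs, hc]

theorem disjoint_image2_update (h : Disjoint C C') :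
    Disjoint (image2 (update · p ·) S C) (image2 (update · p ·) S' C') := by
  rw [Set.disjoint_left]
  rintro _ ⟨s, -, c, hc, rfl⟩ ⟨s', -, c', hc', h'⟩
  exact h.ne_of_mem hc hc' (by simpa using (congr_fun h' p).symm)

theorem apply_eq_of_mem_image2_update {q : α} (hq : q ≠ p) (hS : ∀ s ∈ S, s q = z) :
    ∀ s ∈ image2 (update · p ·) S C, s q = z := by
  rintro _ ⟨s, hs, c, -, rfl⟩
  dsimp only
  rw [update_of_ne hq]
  exact hS s hs

end UpdateImage

def Pb (b m : ℕ) : Set (ℕ → ℕ) :=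
  {t | (∀ j, t j ≤ b) ∧ (∀ j, j ∉ Finset.Icc 1 m → t j = 0) ∧
    (∀ j, t j = b → ∀ i < j, t i = 0)}

namespace Pb

variable {b m : ℕ} {t : ℕ → ℕ}

theorem zero_mem : 0 ∈ Pb b m :=
  ⟨fun _ => Nat.zero_le _, fun _ _ => rfl, fun _ _ _ _ => rfl⟩

theorem apply_eq_zero (ht : t ∈ Pb b m) {j : ℕ} (hj : j ∉ Finset.Icc 1 m) : t j = 0 :=
  ht.2.1 j hj

theorem eq_zero_iff (ht : t ∈ Pb b m) : t = 0 ↔ ∀ i, 1 ≤ i → i ≤ m → t i = 0 := by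
  refine ⟨fun h i _ _ => by rw [h]; rfl, fun h => funext fun j => ?_⟩
  by_cases hj : j ∈ Finset.Icc 1 m
  · exact h j (Finset.mem_Icc.1 hj).1 (Finset.mem_Icc.1 hj).2
  · exact apply_eq_zero ht hj

theorem zero_eq : Pb b 0 = {0} :=
  Set.ext fun _ => ⟨fun ht => (eq_zero_iff ht).2 (by omega), fun ht => ht ▸ zero_mem⟩

theorem mem_succ_iff_of_lt (hlast : t (m + 1) < b) :
    t ∈ Pb b (m + 1) ↔ update t (m + 1) 0 ∈ Pb b m := by
  simp only [Pb, mem_ofPred_eq, Finset.mem_Icc, update_apply]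
  constructor <;> rintro ⟨hle, hsupp, htop⟩ <;>
    refine ⟨fun j => ?_, fun j hj => ?_, fun j hj i hij => ?_⟩ <;> grind

theorem mem_succ_iff_of_eq (hlast : t (m + 1) = b) :
    t ∈ Pb b (m + 1) ↔ update t (m + 1) 0 = 0 := by
  simp only [Pb, mem_ofPred_eq, Finset.mem_Icc, funext_iff, update_apply, Pi.zero_apply]
  constructor
  · rintro ⟨-, hsupp, htop⟩ j
    split_ifs with hj
    · rfl
    · rcases Nat.lt_or_gt_of_ne hj with hj | hj
      · exact htop _ hlast j hj
      · exact hsupp j (by omega)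
  · intro h
    refine ⟨fun j => ?_, fun j hj => ?_, fun j hj i hij => ?_⟩ <;> grind

theorem succ_eq (b m : ℕ) :
    Pb b (m + 1) = image2 (update · (m + 1) ·) (Pb b m) (Iio b) ∪
      image2 (update · (m + 1) ·) {0} {b} := by
  ext t
  rw [mem_union, mem_image2_update_iff fun _ hs => apply_eq_zero hs (by simp),
    mem_image2_update_iff fun _ hs => congr_fun (mem_singleton_iff.1 hs) _, mem_Iio,
    mem_singleton_iff, mem_singleton_iff]
  rcases lt_trichotomy (t (m + 1)) b with h | h | h
  · simp [h, h.ne, mem_succ_iff_of_lt h]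
  · simp [h, mem_succ_iff_of_eq h]
  · simp only [h.ne', h.not_gt, false_and, or_false, iff_false]
    exact fun ht => (ht.1 (m + 1)).not_gt h

theorem encard_eq (b m : ℕ) :
    (Pb b m).encard = ((∑ i ∈ Finset.range (m + 1), b ^ i : ℕ) : ℕ∞) := by
  induction m with
  | zero => simp [zero_eq]
  | succ m ih =>
    rw [succ_eq, encard_union_eq (disjoint_image2_update (by simp)),
      encard_image2_update fun _ hs => apply_eq_zero hs (by simp),
      encard_image2_update fun _ hs => congr_fun (mem_singleton_iff.1 hs) _, ih,
      encard_singleton, encard_singleton, ← Iio_def, Nat.encard_range, geom_sum_succ (n := m + 1)]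
    push_cast
    ring

end Pb

theorem Rb_iff_mem_Pb {b n : ℕ} {t : ℕ → ℕ} :
    Rb b n t ↔ t ∈ Pb b (n + 1) ∧ t (n + 1) ≤ b - 1 ∧
      (t (n + 1) = b - 1 → t n ≤ b - 1) ∧
      (t n = b - 1 → t (n + 1) = b - 1 → ∀ i, 1 ≤ i → i ≤ n - 1 → t i = 0) := by
  simp only [Rb, Pb, mem_ofPred_eq]
  tauto

theorem Rb_succ_iff_of_lt {b m : ℕ} {t : ℕ → ℕ} (ht : t (m + 1) < b) :
    Rb b (m + 1) t ↔ t (m + 2) < b ∧ update (update t (m + 2) 0) (m + 1) 0 ∈ Pb b m ∧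
      (t (m + 1) = b - 1 → t (m + 2) = b - 1 → update (update t (m + 2) 0) (m + 1) 0 = 0) := by
  by_cases hlast : t (m + 2) < b
  · have hpre : update t (m + 2) 0 (m + 1) < b := by rwa [update_of_ne (by omega)]
    rw [Rb_iff_mem_Pb, Pb.mem_succ_iff_of_lt hlast, Pb.mem_succ_iff_of_lt hpre]
    simp only [add_assoc, Nat.reduceAdd, add_tsub_cancel_right]
    have hu : ∀ i ≤ m, update (update t (m + 2) 0) (m + 1) 0 i = t i := fun i hi => by
      rw [update_of_ne (by omega), update_of_ne (by omega)]
    constructor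
    · rintro ⟨hmem, -, -, hzero⟩
      refine ⟨hlast, hmem, fun h1 h2 => (Pb.eq_zero_iff hmem).2 fun i hi1 hi2 => ?_⟩
      rw [hu i hi2]
      exact hzero h1 h2 i hi1 hi2
    · rintro ⟨-, hmem, hzero⟩
      refine ⟨hmem, by omega, fun _ => by omega, fun h1 h2 i hi1 hi2 => ?_⟩
      rw [← hu i hi2, hzero h1 h2]
      rfl
  · simp only [hlast, false_and, iff_false]
    exact fun h => hlast (h.2.2.1.trans_lt (by omega))

section Fibers

variable {b m : ℕ}

theorem Rb_fiber_eq_of_lt {k : ℕ} (hk : k + 1 < b) :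
    {t | Rb b (m + 1) t ∧ t (m + 1) = k} =
      image2 (update · (m + 2) ·) (image2 (update · (m + 1) ·) (Pb b m) {k}) (Iio b) := by
  ext t
  rw [mem_image2_update_iff (apply_eq_of_mem_image2_update (by omega)
      fun _ hs => Pb.apply_eq_zero hs (by simp)),
    mem_image2_update_iff fun _ hs => Pb.apply_eq_zero hs (by simp), update_of_ne (by omega),
    mem_ofPred_eq, mem_Iio, mem_singleton_iff]
  constructor
  · rintro ⟨hR, rfl⟩
    obtain ⟨hlast, hpre, -⟩ := (Rb_succ_iff_of_lt (by omega)).1 hR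
    exact ⟨hlast, rfl, hpre⟩
  · rintro ⟨hlast, rfl, hpre⟩
    exact ⟨(Rb_succ_iff_of_lt (by omega)).2 ⟨hlast, hpre, fun h => by omega⟩, rfl⟩

theorem Rb_fiber_eq_top (hb : 1 ≤ b) :
    {t | Rb b (m + 1) t ∧ t (m + 1) = b - 1} =
      image2 (update · (m + 2) ·) (image2 (update · (m + 1) ·) (Pb b m) {b - 1})
          (Iio (b - 1)) ∪
        image2 (update · (m + 2) ·) (image2 (update · (m + 1) ·) {0} {b - 1}) {b - 1} := by
  ext t
  rw [mem_union, mem_image2_update_iff (apply_eq_of_mem_image2_update (by omega)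
      fun _ hs => Pb.apply_eq_zero hs (by simp)),
    mem_image2_update_iff fun _ hs => Pb.apply_eq_zero hs (by simp),
    mem_image2_update_iff (apply_eq_of_mem_image2_update (S := {(0 : ℕ → ℕ)}) (by omega)
      fun _ hs => congr_fun (mem_singleton_iff.1 hs) _),
    mem_image2_update_iff fun _ hs => congr_fun (mem_singleton_iff.1 hs) _,
    update_of_ne (by omega), mem_ofPred_eq, mem_Iio]
  simp only [mem_singleton_iff, Pi.zero_apply]
  rw [update_of_ne (by omega)]
  constructor
  · rintro ⟨hR, htn⟩
    obtain ⟨hlast, hpre, hzero⟩ := (Rb_succ_iff_of_lt (by omega)).1 hR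
    rcases Nat.lt_or_ge (t (m + 2)) (b - 1) with h | h
    · exact Or.inl ⟨h, htn, hpre⟩
    · exact Or.inr ⟨by omega, htn, hzero htn (by omega)⟩
  · rintro (⟨hlast, htn, hpre⟩ | ⟨hlast, htn, hzero⟩)
    · exact ⟨(Rb_succ_iff_of_lt (by omega)).2 ⟨by omega, hpre, fun _ h => by omega⟩, htn⟩
    · refine ⟨(Rb_succ_iff_of_lt (by omega)).2 ⟨by omega, ?_, fun _ _ => hzero⟩, htn⟩
      exact hzero ▸ Pb.zero_mem

theorem encard_Rb_fiber_of_lt {k : ℕ} (hk : k + 1 < b) :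
    {t | Rb b (m + 1) t ∧ t (m + 1) = k}.encard =
      ((∑ i ∈ Finset.range (m + 1), b ^ i) * b : ℕ) := by
  rw [Rb_fiber_eq_of_lt hk, encard_image2_update (apply_eq_of_mem_image2_update (by omega)
      fun _ hs => Pb.apply_eq_zero hs (by simp)),
    encard_image2_update fun _ hs => Pb.apply_eq_zero hs (by simp), Pb.encard_eq,
    encard_singleton, ← Iio_def, Nat.encard_range]
  push_cast
  ring

theorem encard_Rb_fiber_top (hb : 1 ≤ b) :
    {t | Rb b (m + 1) t ∧ t (m + 1) = b - 1}.encard =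
      ((∑ i ∈ Finset.range (m + 1), b ^ i) * (b - 1) + 1 : ℕ) := by
  rw [Rb_fiber_eq_top hb, encard_union_eq (disjoint_image2_update (by simp)),
    encard_image2_update (apply_eq_of_mem_image2_update (by omega)
      fun _ hs => Pb.apply_eq_zero hs (by simp)),
    encard_image2_update fun _ hs => Pb.apply_eq_zero hs (by simp),
    encard_image2_update (apply_eq_of_mem_image2_update (S := {(0 : ℕ → ℕ)}) (by omega)
      fun _ hs => congr_fun (mem_singleton_iff.1 hs) _),
    encard_image2_update fun _ hs => congr_fun (mem_singleton_iff.1 hs) _, Pb.encard_eq,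
    encard_singleton, encard_singleton, ← Iio_def, Nat.encard_range]
  push_cast
  ring

end Fibers

theorem Rb_count_fixed_nth (n b : ℕ) (hn : 2 ≤ n) (hb : 2 ≤ b) :
    (∀ k, 1 ≤ k → k ≤ b - 2 →
      Set.ncard {t : ℕ → ℕ | Rb b n t ∧ t n = k} = (b ^ (n + 1) - b) / (b - 1)) ∧
    Set.ncard {t : ℕ → ℕ | Rb b n t ∧ t n = b - 1} = b ^ n := by
  obtain ⟨m, rfl⟩ : ∃ m, n = m + 1 := ⟨n - 1, by omega⟩
  have hgeom := geom_sum_mul_of_one_le (show 1 ≤ b by omega) (m + 1)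
  refine ⟨fun k _ hk => ?_, ?_⟩
  · rw [ncard_def, encard_Rb_fiber_of_lt (by omega), ENat.toNat_natCast]
    have : b ^ (m + 1 + 1) - b = (∑ i ∈ Finset.range (m + 1), b ^ i) * b * (b - 1) := by
      rw [mul_right_comm, hgeom, Nat.sub_mul, one_mul, pow_succ]
    rw [this, Nat.mul_div_cancel _ (by omega)]
  · rw [ncard_def, encard_Rb_fiber_top (by omega), ENat.toNat_natCast, hgeom]
    have := Nat.one_le_pow (m + 1) b (by omega)
    omega
end

section
/- Let n and b be natural numbers with n ≥ 2, b ≥ 2 and b not congruent to 1 modulo 3. Then the genus of T_{b'}(n), i.e., the cardinality of ℕ \ T_{b'}(n), equals 3b + (b^(2n)·(b³ + b² − b − 1) + b^n·(b²·(n+1) − (n+3)))/2. -/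
/-!
Put `q = (b + 1) * b ^ n`, so that the generators are `q * b ^ i + 1`. A sum of `c` generators
whose powers `b ^ i` add up to `M` equals `q * M + c`, and for a given `M` the possible `c` are
exactly the numbers between the base-`b` digit sum `s(M)` and `M` that are congruent to `M`
modulo `b - 1` (trading one `b ^ (i + 1)` for `b` copies of `b ^ i` adds `b - 1` terms). So the
semigroup is the union over `M` of the progressions `q M + s(M) ≤ x ≤ (q + 1) M`,
`x ≡ (q + 1) M [MOD b - 1]`.

Since `q + 1 ≡ 3` is a unit modulo `b - 1`, every residue class of gaps belongs to one class of
`M`, and the gaps split into disjoint blocks, one just below each progression: `(q + 1) M / (b - 1)`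
gaps for `M < b - 1`, and `q - t(M)` gaps otherwise, where `t(M) = ∑ ⌊M / b ^ i⌋ (i ≥ 1)`
satisfies `s(M) + (b - 1) t(M) = M`. The blocks are empty once `t(M) ≥ q`, which first happens
at `K = b (b (b ^ n - b ^ (n - 2)) + 2)`, and `∑_{M < K} t(M)` follows from
`t(b u + r) = u + t(u)`.
-/

/-- The Thabit numerical semigroup of the second kind base `b`: the additive submonoid of ℕ
generated by `{(b+1)·b^(n+i) + 1 : i ∈ ℕ}`. -/
def thabitSemigroup2 (b n : ℕ) : AddSubmonoid ℕ :=
  AddSubmonoid.closure {m : ℕ | ∃ i : ℕ, m = (b + 1) * b ^ (n + i) + 1}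

open Finset

theorem Nat.card_Ioo_filter_modEq (d a c : ℕ) :
    #{x ∈ Ioo a c | x ≡ c [MOD d]} = (c - a - 1) / d := by
  rw [← Nat.Ioc_filter_dvd_card_eq_div]
  refine card_nbij' (c - ·) (c - ·) ?_ ?_ ?_ ?_
  · intro x hx
    simp only [coe_filter, mem_Ioo, mem_Ioc, Set.mem_ofPred_eq] at hx ⊢
    exact ⟨by omega, (Nat.modEq_iff_dvd' hx.1.2.le).1 hx.2⟩
  · intro y hy
    simp only [coe_filter, mem_Ioo, mem_Ioc, Set.mem_ofPred_eq] at hy ⊢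
    refine ⟨by omega, (Nat.modEq_iff_dvd' (Nat.sub_le c y)).2 ?_⟩
    rw [Nat.sub_sub_self (by omega)]
    exact hy.2
  · intro x hx
    simp only [coe_filter, mem_Ioo, Set.mem_ofPred_eq] at hx
    dsimp only
    omega
  · intro y hy
    simp only [coe_filter, mem_Ioc, Set.mem_ofPred_eq] at hy
    dsimp only
    omega

theorem Nat.sum_range_mul_mod_eq_sum_range {a d : ℕ} (hcop : Nat.Coprime a d) :
    ∑ M ∈ range d, a * M % d = ∑ M ∈ range d, M := by
  rcases Nat.eq_zero_or_pos d with rfl | hd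
  · simp
  have hinj : Set.InjOn (fun M => a * M % d) (range d) := fun M hM M' hM' h => by
    simpa [Nat.ModEq, Nat.mod_eq_of_lt (mem_range.1 hM), Nat.mod_eq_of_lt (mem_range.1 hM')] using
      Nat.ModEq.cancel_left_of_coprime hcop.symm h
  have himage : (range d).image (fun M => a * M % d) = range d :=
    eq_of_subset_of_card_le (image_subset_iff.2 fun M _ => mem_range.2 (Nat.mod_lt _ hd))
      (Finset.card_image_of_injOn hinj).ge
  calc ∑ M ∈ range d, a * M % d = ∑ y ∈ (range d).image (fun M => a * M % d), y :=
        (sum_image (f := fun y => y) hinj).symm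
    _ = ∑ M ∈ range d, M := by rw [himage]

theorem Nat.two_mul_sum_range_mul_div {a d : ℕ} (hcop : Nat.Coprime a d) :
    2 * ∑ M ∈ range d, a * M / d = (a - 1) * (d - 1) := by
  rcases Nat.eq_zero_or_pos d with rfl | hd
  · simp
  have hsplit : d * ∑ M ∈ range d, a * M / d + ∑ M ∈ range d, a * M % d
      = a * ∑ M ∈ range d, M := by
    rw [mul_sum, mul_sum, ← sum_add_distrib]
    exact sum_congr rfl fun M _ => Nat.div_add_mod _ _
  rw [Nat.sum_range_mul_mod_eq_sum_range hcop] at hsplit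
  have hdiv : d * ∑ M ∈ range d, a * M / d = (a - 1) * ∑ M ∈ range d, M := by
    rw [Nat.sub_one_mul]
    omega
  refine Nat.eq_of_mul_eq_mul_left hd ?_
  calc d * (2 * ∑ M ∈ range d, a * M / d)
      = (a - 1) * ((∑ M ∈ range d, M) * 2) := by rw [mul_left_comm, hdiv]; ring
    _ = d * ((a - 1) * (d - 1)) := by rw [sum_range_id_mul_two]; ring

def legendreSum (b M : ℕ) : ℕ :=
  ∑ i ∈ range (Nat.log b M).succ, M / b ^ i.succ

section LegendreSum

variable {b : ℕ}

theorem legendreSum_eq_sum_range (hb : 1 < b) {M K : ℕ} (hK : Nat.log b M < K) :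
    legendreSum b M = ∑ i ∈ range K, M / b ^ i.succ := by
  refine sum_subset (range_subset_range.2 hK) fun i _ hi => Nat.div_eq_of_lt ?_
  exact (Nat.lt_pow_succ_log_self hb M).trans_le
    (Nat.pow_le_pow_right hb.le (by simp at hi; omega))

theorem digitSum_add_sub_one_mul_legendreSum (M : ℕ) :
    (b.digits M).sum + (b - 1) * legendreSum b M = M := by
  rw [legendreSum, Nat.sub_one_mul_sum_log_div_pow_eq_sub_sum_digits]
  have := Nat.digit_sum_le b M
  omega

theorem legendreSum_of_lt {M : ℕ} (h : M < b) : legendreSum b M = 0 := by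
  simp [legendreSum, Nat.log_of_lt h, Nat.div_eq_of_lt h]

theorem div_le_legendreSum (M : ℕ) : M / b ≤ legendreSum b M := by
  unfold legendreSum
  simpa using single_le_sum (f := fun i => M / b ^ i.succ) (fun _ _ => Nat.zero_le _)
    (mem_range.2 (Nat.succ_pos (Nat.log b M)))

theorem legendreSum_mono (hb : 1 < b) : Monotone (legendreSum b) := by
  intro M N h
  rw [legendreSum_eq_sum_range hb (Nat.lt_succ_of_le (Nat.log_mono_right h)),
    legendreSum_eq_sum_range hb (Nat.lt_succ_self (Nat.log b N))]
  exact sum_le_sum fun i _ => Nat.div_le_div_right h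

theorem legendreSum_add_le (hb : 1 < b) (M N : ℕ) :
    legendreSum b M + legendreSum b N ≤ legendreSum b (M + N) := by
  have hK := Nat.lt_succ_self (Nat.log b (M + N))
  rw [legendreSum_eq_sum_range hb ((Nat.log_mono_right (Nat.le_add_right M N)).trans_lt hK),
    legendreSum_eq_sum_range hb ((Nat.log_mono_right (Nat.le_add_left N M)).trans_lt hK),
    legendreSum_eq_sum_range hb hK, ← sum_add_distrib]
  exact sum_le_sum fun i _ => Nat.div_add_div_le_add_div

theorem legendreSum_mul_add (hb : 1 < b) (u : ℕ) {r : ℕ} (hr : r < b) :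
    legendreSum b (b * u + r) = u + legendreSum b u := by
  have hu : u ≤ b * u + r := (Nat.le_mul_of_pos_left u (by omega)).trans (Nat.le_add_right _ r)
  have hlog := Nat.log_le_self b (b * u + r)
  rw [legendreSum_eq_sum_range hb (K := b * u + r + 2) (by omega),
    legendreSum_eq_sum_range hb (K := b * u + r + 1) ((Nat.log_le_self b u).trans_lt (by omega)),
    sum_range_succ', add_comm]
  congr 1
  · simp [Nat.mul_add_div (by omega : 0 < b), Nat.div_eq_of_lt hr]
  · refine sum_congr rfl fun i _ => ?_
    rw [pow_succ' b (i + 1), ← Nat.div_div_eq_div_mul, Nat.mul_add_div (by omega),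
      Nat.div_eq_of_lt hr, add_zero]

theorem legendreSum_mul_sub_one_lt (hb : 1 < b) {X : ℕ} (hX : 0 < X) :
    legendreSum b (b * X - 1) < legendreSum b (b * X) := by
  have : b * X - 1 = b * (X - 1) + (b - 1) := by
    have : 1 ≤ b * X := Nat.mul_pos (by omega) hX
    zify [this, Nat.one_le_of_lt hX, hb.le]
    ring
  rw [this, legendreSum_mul_add hb _ (by omega), ← add_zero (b * X),
    legendreSum_mul_add hb _ (by omega)]
  have := legendreSum_mono hb (Nat.sub_le X 1)
  omega

theorem digitSum_le_sub_one_add_legendreSum (hb : 1 < b) (M : ℕ) :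
    (b.digits M).sum ≤ b - 1 + legendreSum b M := by
  rcases Nat.eq_zero_or_pos M with rfl | hM
  · simp
  rw [Nat.digits_def' hb hM, List.sum_cons]
  have := Nat.digit_sum_le b (M / b)
  have := div_le_legendreSum (b := b) M
  have := Nat.mod_lt M (by omega : 0 < b)
  omega

theorem digitSum_add_le (hb : 1 < b) (M N : ℕ) :
    (b.digits (M + N)).sum ≤ (b.digits M).sum + (b.digits N).sum := by
  have hle := Nat.mul_le_mul_left (b - 1) (legendreSum_add_le hb M N)
  rw [mul_add] at hle
  have := digitSum_add_sub_one_mul_legendreSum (b := b) M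
  have := digitSum_add_sub_one_mul_legendreSum (b := b) N
  have := digitSum_add_sub_one_mul_legendreSum (b := b) (M + N)
  omega

theorem digitSum_pow (hb : 1 < b) (i : ℕ) : (b.digits (b ^ i)).sum = 1 := by
  simpa [Nat.digits_of_lt b 1 one_ne_zero hb] using
    congrArg List.sum (Nat.digits_base_pow_mul (k := i) hb one_pos)

theorem modEq_digitSum (M : ℕ) : M ≡ (b.digits M).sum [MOD b - 1] := by
  conv_lhs => rw [← digitSum_add_sub_one_mul_legendreSum (b := b) M]
  exact Nat.add_mul_mod_self_left _ _ _

theorem sum_range_legendreSum_mul_add (hb : 1 < b) (X : ℕ) {r : ℕ} (hr : r ≤ b) :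
    ∑ M ∈ range (b * X + r), legendreSum b M
      = ∑ M ∈ range (b * X), legendreSum b M + r * (X + legendreSum b X) := by
  rw [sum_range_add, sum_congr rfl fun j hj => legendreSum_mul_add hb X
    ((mem_range.1 hj).trans_le hr), sum_const, card_range, smul_eq_mul]

theorem two_mul_sum_range_legendreSum_mul (hb : 1 < b) (X : ℕ) :
    2 * ∑ M ∈ range (b * X), legendreSum b M + b * X
      = 2 * b * ∑ M ∈ range X, legendreSum b M + b * X ^ 2 := by
  induction X with
  | zero => simp
  | succ X ih =>
    rw [mul_add_one, sum_range_legendreSum_mul_add hb X le_rfl, sum_range_succ]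
    linarith

end LegendreSum

section Representations

variable {b : ℕ}

theorem exists_card_eq_sum_ofDigits (L : List ℕ) :
    ∃ m : Multiset ℕ, Multiset.card m = L.sum ∧ (m.map (b ^ ·)).sum = Nat.ofDigits b L := by
  induction L with
  | nil => exact ⟨0, rfl, rfl⟩
  | cons a L ih =>
    obtain ⟨m, hcard, hsum⟩ := ih
    refine ⟨Multiset.replicate a 0 + m.map (· + 1), ?_, ?_⟩
    · simp [hcard]
    · simp [Nat.ofDigits_cons, pow_succ', Multiset.sum_map_mul_left, hsum]

theorem exists_card_eq_digitSum (M : ℕ) :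
    ∃ m : Multiset ℕ, Multiset.card m = (b.digits M).sum ∧ (m.map (b ^ ·)).sum = M := by
  simpa [Nat.ofDigits_digits] using exists_card_eq_sum_ofDigits (b := b) (b.digits M)

theorem exists_card_eq_add_sub_one (hb : 0 < b) (m : Multiset ℕ)
    (h : Multiset.card m < (m.map (b ^ ·)).sum) :
    ∃ m' : Multiset ℕ, Multiset.card m' = Multiset.card m + (b - 1) ∧
      (m'.map (b ^ ·)).sum = (m.map (b ^ ·)).sum := by
  induction m using Multiset.induction_on with
  | empty => simp at h
  | cons a m ih =>
    cases a with
    | zero =>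
      obtain ⟨m', hcard, hsum⟩ := ih (by simp at h; omega)
      exact ⟨0 ::ₘ m', by simp [hcard]; omega, by simp [hsum]⟩
    | succ i =>
      refine ⟨Multiset.replicate b i + m, ?_, ?_⟩
      · simp only [Multiset.card_add, Multiset.card_replicate, Multiset.card_cons]
        omega
      · simp [pow_succ']

theorem exists_multiset_card_sum_pow_iff (hb : 1 < b) {M c : ℕ} :
    (∃ m : Multiset ℕ, Multiset.card m = c ∧ (m.map (b ^ ·)).sum = M) ↔
      (b.digits M).sum ≤ c ∧ c ≤ M ∧ c ≡ M [MOD b - 1] := by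
  constructor
  · rintro ⟨m, rfl, rfl⟩
    induction m using Multiset.induction_on with
    | empty => simp [Nat.ModEq]
    | cons i m ih =>
      obtain ⟨hlow, hup, hmod⟩ := ih
      have hpow : 1 ≡ b ^ i [MOD b - 1] := (digitSum_pow hb i ▸ modEq_digitSum (b ^ i)).symm
      simp only [Multiset.card_cons, Multiset.map_cons, Multiset.sum_cons]
      refine ⟨?_, ?_, ?_⟩
      · have := digitSum_add_le hb (b ^ i) (m.map (b ^ ·)).sum
        rw [digitSum_pow hb] at this
        omega
      · have := Nat.one_le_pow i b (by omega)
        omega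
      · rw [add_comm]
        exact hpow.add hmod
  · rintro ⟨hlow, hup, hmod⟩
    obtain ⟨j, hj⟩ : (b - 1) ∣ c - (b.digits M).sum :=
      (Nat.modEq_iff_dvd' hlow).1 ((modEq_digitSum M).symm.trans hmod.symm)
    obtain rfl : c = (b.digits M).sum + (b - 1) * j := by omega
    clear hlow hmod hj
    induction j with
    | zero => simpa using exists_card_eq_digitSum M
    | succ j ih =>
      rw [mul_add_one] at hup
      obtain ⟨m, hcard, hsum⟩ := ih (by omega)
      obtain ⟨m', hcard', hsum'⟩ :=
        exists_card_eq_add_sub_one (Nat.zero_lt_of_lt hb) m (by omega)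
      exact ⟨m', by rw [hcard', hcard]; ring, hsum'.trans hsum⟩

end Representations

def powSemigroup (b q : ℕ) : AddSubmonoid ℕ :=
  AddSubmonoid.closure (Set.range fun i => q * b ^ i + 1)

theorem thabitSemigroup2_eq_powSemigroup (b n : ℕ) :
    thabitSemigroup2 b n = powSemigroup b ((b + 1) * b ^ n) := by
  simp only [thabitSemigroup2, powSemigroup, pow_add, mul_assoc, Set.range, eq_comm]

section Membership

variable {b q : ℕ}

theorem mem_powSemigroup_iff_exists_multiset {x : ℕ} :
    x ∈ powSemigroup b q ↔
      ∃ m : Multiset ℕ, q * (m.map (b ^ ·)).sum + Multiset.card m = x := by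
  constructor
  · intro hx
    induction hx using AddSubmonoid.closure_induction with
    | mem y hy =>
      obtain ⟨i, rfl⟩ := hy
      exact ⟨{i}, by simp⟩
    | zero => exact ⟨0, by simp⟩
    | add y z _ _ hy hz =>
      obtain ⟨m, rfl⟩ := hy
      obtain ⟨m', rfl⟩ := hz
      exact ⟨m + m', by simp only [Multiset.map_add, Multiset.sum_add, Multiset.card_add]; ring⟩
  · rintro ⟨m, rfl⟩
    have : (m.map fun i => q * b ^ i + 1).sum = q * (m.map (b ^ ·)).sum + Multiset.card m := by
      simp [Multiset.sum_map_add, Multiset.sum_map_mul_left]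
    rw [← this]
    exact AddSubmonoid.multiset_sum_mem _ _ fun y hy => by
      obtain ⟨i, -, rfl⟩ := Multiset.mem_map.1 hy
      exact AddSubmonoid.subset_closure ⟨i, rfl⟩

theorem mem_powSemigroup_iff (hb : 1 < b) {x : ℕ} :
    x ∈ powSemigroup b q ↔ ∃ M, q * M + (b.digits M).sum ≤ x ∧ x ≤ (q + 1) * M ∧
      x ≡ (q + 1) * M [MOD b - 1] := by
  simp only [mem_powSemigroup_iff_exists_multiset]
  constructor
  · rintro ⟨m, rfl⟩
    obtain ⟨hlow, hup, hmod⟩ := (exists_multiset_card_sum_pow_iff hb).1 ⟨m, rfl, rfl⟩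
    refine ⟨(m.map (b ^ ·)).sum, by omega, by linarith, ?_⟩
    rw [add_one_mul]
    exact hmod.add_left _
  · rintro ⟨M, hlow, hup, hmod⟩
    obtain ⟨c, rfl⟩ := Nat.exists_eq_add_of_le (le_trans (Nat.le_add_right _ _) hlow)
    obtain ⟨m, hcard, hsum⟩ := (exists_multiset_card_sum_pow_iff hb (c := c) (M := M)).2
      ⟨by omega, by linarith, Nat.ModEq.add_left_cancel' (q * M) (by rwa [← add_one_mul])⟩
    exact ⟨m, by rw [hcard, hsum]⟩

end Membership

/-- For `M < b - 1` the truncated subtraction puts the lower end at `0`. -/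
def gapBlock (b q M : ℕ) : Finset ℕ :=
  {x ∈ Ioo ((q + 1) * (M - (b - 1))) (q * M + (b.digits M).sum) | x ≡ (q + 1) * M [MOD b - 1]}

section GapBlocks

variable {b q : ℕ}

theorem mem_gapBlock {M x : ℕ} :
    x ∈ gapBlock b q M ↔ (q + 1) * (M - (b - 1)) < x ∧ x < q * M + (b.digits M).sum ∧
      x ≡ (q + 1) * M [MOD b - 1] := by
  simp [gapBlock, and_assoc]

theorem card_gapBlock (M : ℕ) : #(gapBlock b q M) =
    (q * M + (b.digits M).sum - (q + 1) * (M - (b - 1)) - 1) / (b - 1) := by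
  have hmod : (q + 1) * M ≡ q * M + (b.digits M).sum [MOD b - 1] := by
    rw [add_one_mul]
    exact (modEq_digitSum M).add_left (q * M)
  rw [← Nat.card_Ioo_filter_modEq, gapBlock]
  congr 1
  exact filter_congr fun x _ => ⟨fun h => h.trans hmod, fun h => h.trans hmod.symm⟩

theorem card_gapBlock_of_le (hb : 1 < b) {M : ℕ} (hM : b - 1 ≤ M) :
    #(gapBlock b q M) = q - legendreSum b M := by
  rw [card_gapBlock]
  obtain ⟨M', rfl⟩ := Nat.exists_eq_add_of_le' hM
  have hsum := digitSum_add_sub_one_mul_legendreSum (b := b) (M' + (b - 1))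
  have hd : 0 < b - 1 := by omega
  generalize b - 1 = d at hsum hd ⊢
  generalize legendreSum b (M' + d) = t at hsum ⊢
  have hnum : q * (M' + d) + (b.digits (M' + d)).sum - (q + 1) * (M' + d - d) - 1
      = d * (q + 1 - t) - 1 := by
    rw [Nat.add_sub_cancel, Nat.mul_sub]
    have : q * (M' + d) = q * M' + d * q := by ring
    have : d * (q + 1) = d * q + d := by ring
    have : (q + 1) * M' = q * M' + M' := by ring
    omega
  rw [hnum]
  rcases Nat.eq_zero_or_pos (q + 1 - t) with h | h
  · simp only [h, mul_zero, Nat.zero_sub, Nat.zero_div]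
    omega
  · rw [Nat.mul_sub_div 0 d _ (Nat.mul_pos hd h), Nat.zero_div]
    omega

theorem card_gapBlock_of_lt (hcop : Nat.Coprime (q + 1) (b - 1)) {M : ℕ}
    (hM : M < b - 1) : #(gapBlock b q M) = (q + 1) * M / (b - 1) := by
  have hdigits : (b.digits M).sum = M := by
    simpa [legendreSum_of_lt (show M < b by omega)] using
      digitSum_add_sub_one_mul_legendreSum (b := b) M
  rw [card_gapBlock, hdigits, Nat.sub_eq_zero_of_le hM.le, mul_zero, Nat.sub_zero, ← add_one_mul]
  rcases Nat.eq_zero_or_pos M with rfl | hM0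
  · simp
  obtain ⟨N, hN⟩ : ∃ N, (q + 1) * M = N + 1 :=
    Nat.exists_eq_add_one_of_ne_zero (Nat.mul_ne_zero (by omega) (by omega))
  rw [hN, Nat.add_sub_cancel, Nat.succ_div_of_not_dvd]
  rw [← hN]
  intro hdvd
  have := Nat.le_of_dvd hM0 ((Nat.Coprime.dvd_mul_left hcop.symm).1 hdvd)
  omega

theorem legendreSum_lt_of_mem_gapBlock (hb : 1 < b) (hq : 0 < q) {M x : ℕ}
    (hx : x ∈ gapBlock b q M) : legendreSum b M < q := by
  rcases lt_or_ge M (b - 1) with hM | hM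
  · rwa [legendreSum_of_lt (by omega)]
  · have := card_pos.2 ⟨x, hx⟩
    rw [card_gapBlock_of_le hb hM] at this
    omega

theorem not_mem_of_mem_gapBlock (hb : 1 < b) (hcop : Nat.Coprime (q + 1) (b - 1)) (hq : 0 < q)
    {M x : ℕ} (hx : x ∈ gapBlock b q M) : x ∉ powSemigroup b q := by
  have hL := legendreSum_lt_of_mem_gapBlock hb hq hx
  rw [mem_gapBlock] at hx
  obtain ⟨hlow, hup, hmod⟩ := hx
  rw [mem_powSemigroup_iff hb]
  rintro ⟨M', hlow', hup', hmod'⟩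
  have hMM' : M ≡ M' [MOD b - 1] :=
    Nat.ModEq.cancel_left_of_coprime hcop.symm (hmod.symm.trans hmod')
  rcases lt_trichotomy M' M with h | rfl | h
  · have := Nat.mul_le_mul_left (q + 1) (Nat.le_sub_of_add_le (hMM'.symm.add_le_of_lt h))
    omega
  · omega
  · -- the later progressions of the class start above the block, as
    -- `s(M) ≤ b - 1 + t(M) ≤ q (b - 1)`
    have hM' : q * M + q * (b - 1) ≤ q * M' := by
      rw [← mul_add]
      exact Nat.mul_le_mul_left q (hMM'.add_le_of_lt h)
    have hdigits := digitSum_le_sub_one_add_legendreSum hb M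
    have : q - 1 ≤ (q - 1) * (b - 1) := Nat.le_mul_of_pos_right _ (by omega)
    have : (q - 1) * (b - 1) = q * (b - 1) - (b - 1) := Nat.sub_one_mul q (b - 1)
    have : b - 1 ≤ q * (b - 1) := Nat.le_mul_of_pos_left _ hq
    omega

theorem exists_mem_gapBlock_of_not_mem (hb : 1 < b) (hcop : Nat.Coprime (q + 1) (b - 1))
    {x : ℕ} (hx : x ∉ powSemigroup b q) : ∃ M, x ∈ gapBlock b q M := by
  have hex : ∃ M, x ≤ (q + 1) * M ∧ x ≡ (q + 1) * M [MOD b - 1] := by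
    obtain ⟨M₀, -, hM₀⟩ := Nat.exists_mul_mod_eq_of_coprime x hcop (by omega)
    refine ⟨M₀ + (b - 1) * x, ?_, ?_⟩
    · have : x ≤ (b - 1) * x := Nat.le_mul_of_pos_left x (by omega)
      have : (b - 1) * x ≤ (q + 1) * ((b - 1) * x) := Nat.le_mul_of_pos_left _ (by omega)
      rw [mul_add]
      omega
    · rw [mul_add, mul_left_comm]
      exact hM₀.symm.trans (Nat.add_mul_mod_self_left _ _ _).symm
  classical
  refine ⟨Nat.find hex, mem_gapBlock.2 ⟨?_, ?_, (Nat.find_spec hex).2⟩⟩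
  · rcases lt_or_ge (Nat.find hex) (b - 1) with h | h
    · rw [Nat.sub_eq_zero_of_le h.le, mul_zero, Nat.pos_iff_ne_zero]
      rintro rfl
      exact hx (zero_mem _)
    · by_contra! hle
      refine Nat.find_min hex (m := Nat.find hex - (b - 1)) (by omega) ⟨hle, ?_⟩
      have : (q + 1) * Nat.find hex = (q + 1) * (Nat.find hex - (b - 1)) + (b - 1) * (q + 1) := by
        rw [mul_comm (b - 1), ← mul_add, Nat.sub_add_cancel h]
      refine (Nat.find_spec hex).2.trans ?_
      rw [this]
      exact Nat.add_mul_mod_self_left _ _ _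
  · by_contra! hle
    exact hx ((mem_powSemigroup_iff hb).2 ⟨_, hle, Nat.find_spec hex⟩)

theorem disjoint_gapBlock (hcop : Nat.Coprime (q + 1) (b - 1)) {M M' : ℕ} (h : M ≠ M') :
    Disjoint (gapBlock b q M) (gapBlock b q M') := by
  wlog hlt : M < M' generalizing M M'
  · exact (this h.symm (by omega)).symm
  refine disjoint_left.2 fun x hx hx' => ?_
  rw [mem_gapBlock] at hx hx'
  have hMM' : M ≡ M' [MOD b - 1] :=
    Nat.ModEq.cancel_left_of_coprime hcop.symm (hx.2.2.symm.trans hx'.2.2)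
  have := Nat.mul_le_mul_left (q + 1) (Nat.le_sub_of_add_le (hMM'.add_le_of_lt hlt))
  have := Nat.digit_sum_le b M
  have := add_one_mul q M
  omega

theorem gaps_eq_biUnion (hb : 1 < b) (hcop : Nat.Coprime (q + 1) (b - 1)) (hq : 0 < q) {K : ℕ}
    (hK : q ≤ legendreSum b K) :
    {x | x ∉ powSemigroup b q} = ↑((range K).biUnion (gapBlock b q)) := by
  ext x
  simp only [Set.mem_ofPred_eq, coe_biUnion, coe_range, Set.mem_Iio, Set.mem_iUnion, mem_coe,
    exists_prop]
  refine ⟨fun hx => ?_, fun ⟨M, _, hx⟩ => not_mem_of_mem_gapBlock hb hcop hq hx⟩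
  obtain ⟨M, hM⟩ := exists_mem_gapBlock_of_not_mem hb hcop hx
  refine ⟨M, ?_, hM⟩
  by_contra! hKM
  have := legendreSum_mono hb hKM
  have := legendreSum_lt_of_mem_gapBlock hb hq hM
  omega

theorem ncard_gaps_eq_sum_card_gapBlock (hb : 1 < b) (hcop : Nat.Coprime (q + 1) (b - 1))
    (hq : 0 < q) {K : ℕ} (hK : q ≤ legendreSum b K) :
    {x | x ∉ powSemigroup b q}.ncard = ∑ M ∈ range K, #(gapBlock b q M) := by
  rw [gaps_eq_biUnion hb hcop hq hK, Set.ncard_coe_finset,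
    card_biUnion fun M _ M' _ h => disjoint_gapBlock hcop h]

theorem two_mul_ncard_gaps (hb : 1 < b) (hcop : Nat.Coprime (q + 1) (b - 1)) {K : ℕ}
    (hK : q ≤ legendreSum b K) (hK' : legendreSum b (K - 1) < q) :
    2 * ({x | x ∉ powSemigroup b q}.ncard : ℤ) = q * ((b : ℤ) - 2)
      + 2 * ((K : ℤ) - ((b : ℤ) - 1)) * q - 2 * ∑ M ∈ range K, (legendreSum b M : ℤ) := by
  have hbK : b - 1 ≤ K := by
    by_contra! h
    rw [legendreSum_of_lt (by omega)] at hK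
    omega
  have hsmall : 2 * ∑ M ∈ range (b - 1), #(gapBlock b q M) = q * (b - 2) := by
    rw [sum_congr rfl fun M hM => card_gapBlock_of_lt hcop (mem_range.1 hM),
      Nat.two_mul_sum_range_mul_div hcop]
    rfl
  have hlarge : ∑ M ∈ Ico (b - 1) K, (#(gapBlock b q M) : ℤ)
      = ∑ M ∈ Ico (b - 1) K, ((q : ℤ) - legendreSum b M) := by
    refine sum_congr rfl fun M hM => ?_
    have hM := mem_Ico.1 hM
    have := legendreSum_mono hb (show M ≤ K - 1 by omega)
    rw [card_gapBlock_of_le hb hM.1, Nat.cast_sub (by omega)]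
  have hsum : ∑ M ∈ range K, (legendreSum b M : ℤ)
      = ∑ M ∈ Ico (b - 1) K, (legendreSum b M : ℤ) := by
    rw [← sum_range_add_sum_Ico _ hbK, sum_eq_zero fun M hM =>
      by rw [legendreSum_of_lt (by simp at hM; omega), Nat.cast_zero], zero_add]
  rw [ncard_gaps_eq_sum_card_gapBlock hb hcop (by omega) hK, ← sum_range_add_sum_Ico _ hbK,
    Nat.cast_add, Nat.cast_sum (Ico _ _), hlarge, hsum, sum_sub_distrib, sum_const, Nat.card_Ico,
    nsmul_eq_mul]
  have := congrArg (Nat.cast : ℕ → ℤ) hsmall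
  push_cast [Nat.cast_sub hbK, Nat.cast_sub hb.le, Nat.cast_sub (show 2 ≤ b from hb)] at this ⊢
  linear_combination this

end GapBlocks

section Thabit

variable {b : ℕ}

theorem legendreSum_block (hb : 1 < b) (m : ℕ) :
    legendreSum b (b ^ m * (b ^ 2 - 1)) + 2 = (b + 1) * b ^ m := by
  have hb2 : 1 ≤ b ^ 2 := Nat.one_le_pow _ _ (by omega)
  induction m with
  | zero =>
    have : b ^ 2 - 1 = b * (b - 1) + (b - 1) := by
      zify [hb2, hb.le]
      ring
    rw [pow_zero, one_mul, this, legendreSum_mul_add hb _ (by omega), legendreSum_of_lt (by omega)]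
    omega
  | succ m ih =>
    rw [pow_succ', mul_assoc, ← add_zero (b * _), legendreSum_mul_add hb _ hb.pos]
    zify [hb2] at ih ⊢
    linear_combination ih

theorem two_mul_sum_range_legendreSum_block (hb : 1 < b) (m : ℕ) :
    2 * ∑ M ∈ range (b ^ m * (b ^ 2 - 1)), (legendreSum b M : ℤ) = ((b : ℤ) - 1) *
      (((b : ℤ) + 1) ^ 2 * (b : ℤ) ^ (2 * m) - (2 * b + 3) * b ^ m - (b + 1) * m * b ^ m) := by
  have hb2 : 1 ≤ b ^ 2 := Nat.one_le_pow _ _ (by omega)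
  rw [← Nat.cast_sum]
  induction m with
  | zero =>
    have hZ : b ^ 0 * (b ^ 2 - 1) = b * (b - 1) + (b - 1) := by
      zify [hb2, hb.le]
      ring
    have hsmall : ∑ M ∈ range (b - 1), legendreSum b M = 0 :=
      sum_eq_zero fun M hM => legendreSum_of_lt (by simp at hM; omega)
    have h := congrArg (Nat.cast : ℕ → ℤ) (two_mul_sum_range_legendreSum_mul hb (b - 1))
    rw [hZ, sum_range_legendreSum_mul_add hb _ (Nat.sub_le b 1), legendreSum_of_lt (by omega)]
    rw [hsmall] at h
    push_cast [Nat.cast_sub hb.le] at h ⊢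
    linear_combination h
  | succ m ih =>
    have h := congrArg (Nat.cast : ℕ → ℤ)
      (two_mul_sum_range_legendreSum_mul hb (b ^ m * (b ^ 2 - 1)))
    rw [pow_succ', mul_assoc]
    push_cast [Nat.cast_sub hb2] at h ih ⊢
    linear_combination h + (b : ℤ) * ih

theorem legendreSum_threshold_sub_one (hb : 1 < b) (m : ℕ) :
    legendreSum b (b * (b * (b ^ m * (b ^ 2 - 1)) + 2) - 1) + 1 = (b + 1) * b ^ (m + 2) := by
  have hb2 : 1 ≤ b ^ 2 := Nat.one_le_pow _ _ (by omega)
  have hblock := legendreSum_block hb m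
  have : b * (b * (b ^ m * (b ^ 2 - 1)) + 2) - 1
      = b * (b * (b ^ m * (b ^ 2 - 1)) + 1) + (b - 1) := by
    rw [mul_add_one, mul_add, mul_two, Nat.add_sub_assoc (by omega), Nat.add_sub_assoc (by omega)]
    omega
  rw [this, legendreSum_mul_add hb _ (by omega), legendreSum_mul_add hb _ hb]
  zify [hb2] at hblock ⊢
  linear_combination hblock

theorem coprime_thabit_add_one (hb : 1 < b) (hb3 : b % 3 ≠ 1) (n : ℕ) :
    Nat.Coprime ((b + 1) * b ^ n + 1) (b - 1) := by
  have hb1 : b ≡ 1 [MOD b - 1] := Nat.modEq_sub hb.le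
  have h3 : (b + 1) * b ^ n + 1 ≡ 3 [MOD b - 1] := by
    simpa using ((hb1.add_right 1).mul (hb1.pow n)).add_right 1
  rw [Nat.Coprime, h3.gcd_eq, ← Nat.Coprime, Nat.Prime.coprime_iff_not_dvd Nat.prime_three]
  omega

end Thabit

theorem thabit2_genus (n b : ℕ) (hn : 2 ≤ n) (hb : 2 ≤ b) (hb3 : b % 3 ≠ 1) :
    2 * (Set.ncard {m : ℕ | m ∉ thabitSemigroup2 b n} : ℤ)
      = 6 * (b : ℤ)
        + (b : ℤ) ^ (2 * n) * ((b : ℤ) ^ 3 + (b : ℤ) ^ 2 - (b : ℤ) - 1)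
        + (b : ℤ) ^ n * ((b : ℤ) ^ 2 * ((n : ℤ) + 1) - ((n : ℤ) + 3)) := by
  obtain ⟨m, rfl⟩ : ∃ m, n = m + 2 := ⟨n - 2, by omega⟩
  have hthreshold := legendreSum_threshold_sub_one hb m
  have hlt := legendreSum_mul_sub_one_lt hb (X := b * (b ^ m * (b ^ 2 - 1)) + 2) (by omega)
  rw [thabitSemigroup2_eq_powSemigroup, two_mul_ncard_gaps hb (coprime_thabit_add_one hb hb3 _)
    (K := b * (b * (b ^ m * (b ^ 2 - 1)) + 2)) (by omega) (by omega)]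
  have hsumK := two_mul_sum_range_legendreSum_mul hb (b * (b ^ m * (b ^ 2 - 1)) + 2)
  have hsumX := sum_range_legendreSum_mul_add hb (b ^ m * (b ^ 2 - 1)) hb
  have hsumbZ := two_mul_sum_range_legendreSum_mul hb (b ^ m * (b ^ 2 - 1))
  have hsumZ := two_mul_sum_range_legendreSum_block hb m
  have hZ := legendreSum_block hb m
  have hb2 : 1 ≤ b ^ 2 := Nat.one_le_pow _ _ (by omega)
  zify at hsumK hsumX hsumbZ hZ
  push_cast [Nat.cast_sub hb2] at hsumK hsumX hsumbZ hsumZ hZ ⊢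
  linear_combination -hsumK - 2 * (b : ℤ) * hsumX - (b : ℤ) * hsumbZ - (b : ℤ) ^ 2 * hsumZ
    - 4 * (b : ℤ) * hZ
end

section
/- Let n and b be natural numbers with n ≥ 1, b even and b ≥ 2, and let A = {b^(n+i) + 1 : i ∈ {0,1,…,n}}. Then A is a minimal system of generators of SC⁺(b,n): the submonoid of ℕ generated by A equals SC⁺(b,n), no proper subset of A generates SC⁺(b,n), and A has exactly n+1 elements; in particular the embedding dimension of SC⁺(b,n) is n+1. -/
/-- The Cunningham numerical semigroup: the additive submonoid of ℕ generated by
`{b^(n+i) + 1 : i ∈ ℕ}`. -/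
def cunninghamSemigroup (b n : ℕ) : AddSubmonoid ℕ :=
  AddSubmonoid.closure {m : ℕ | ∃ i : ℕ, m = b ^ (n + i) + 1}

/-- coprimality of consecutive Cunningham generators -/
lemma cunningham_coprime (n b : ℕ) (hn : 1 ≤ n) (hb : 2 ≤ b) (hbe : Even b) :
    Nat.Coprime (b ^ n + 1) (b ^ (n + 1) + 1) := by
  set d := Nat.gcd (b ^ n + 1) (b ^ (n + 1) + 1) with hd
  have hd1 : d ∣ b ^ n + 1 := Nat.gcd_dvd_left _ _
  have hd2 : d ∣ b ^ (n + 1) + 1 := Nat.gcd_dvd_right _ _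
  have hodd : ¬ 2 ∣ (b ^ n + 1) := by
    have h2 : 2 ∣ b ^ n := dvd_pow hbe.two_dvd (by omega)
    omega
  have hdb : d ∣ b - 1 := by
    have h1 : d ∣ b * (b ^ n + 1) := Dvd.dvd.mul_left hd1 b
    have h3 : b * (b ^ n + 1) = b ^ (n + 1) + b := by rw [pow_succ]; ring
    have h2 : b * (b ^ n + 1) - (b ^ (n + 1) + 1) = b - 1 := by omega
    have := Nat.dvd_sub h1 hd2
    rwa [h2] at this
  have hmod : b ≡ 1 [MOD d] := ((Nat.modEq_iff_dvd' (by omega : 1 ≤ b)).mpr hdb).symm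
  have hmodn : b ^ n ≡ 1 [MOD d] := by
    simpa using hmod.pow n
  have hdvd : d ∣ b ^ n - 1 := by
    have := (Nat.modEq_iff_dvd' (Nat.one_le_pow _ _ (by omega))).mp hmodn.symm
    exact this
  have h2dvd : d ∣ 2 := by
    have hpow : 1 ≤ b ^ n := Nat.one_le_pow _ _ (by omega)
    have : (b ^ n + 1) - (b ^ n - 1) = 2 := by omega
    have := Nat.dvd_sub hd1 hdvd
    rwa [‹(b ^ n + 1) - (b ^ n - 1) = 2›] at this
  rcases (Nat.dvd_prime Nat.prime_two).mp h2dvd with h | h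
  · exact h
  · exact absurd (dvd_trans (h ▸ dvd_refl d) hd1) hodd

/-- Every `b^M + 1` with `n ≤ M` lies in the closure of the truncated generating set. -/
lemma cunningham_key (n b : ℕ) (hn : 1 ≤ n) (hb : 2 ≤ b) (hbe : Even b)
    (M : ℕ) (hM : n ≤ M) :
    b ^ M + 1 ∈ AddSubmonoid.closure {m : ℕ | ∃ i ≤ n, m = b ^ (n + i) + 1} := by
  rcases le_or_gt M (2 * n) with h | h
  · exact AddSubmonoid.subset_closure ⟨M - n, by omega, by rw [Nat.add_sub_cancel' hM]⟩
  · -- use Frobenius with b^n+1 and b^(n+1)+1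
    set p := b ^ n + 1 with hp
    set q := b ^ (n + 1) + 1 with hq
    have hbn : 2 ≤ b ^ n := le_trans hb (Nat.le_self_pow (by omega) b)
    have hbn1 : 2 ≤ b ^ (n + 1) := le_trans hb (Nat.le_self_pow (by omega) b)
    have cop := cunningham_coprime n b hn hb hbe
    have hfrob := (frobeniusNumber_pair cop (by omega : 1 < p) (by omega : 1 < q)).2
    have hmem : b ^ M + 1 ∈ AddSubmonoid.closure ({p, q} : Set ℕ) := by
      by_contra hc
      have hle : b ^ M + 1 ≤ p * q - p - q := hfrob hc
      have hpq : p * q = b ^ n * b ^ (n + 1) + b ^ n + b ^ (n + 1) + 1 := by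
        rw [hp, hq]; ring
      have h1 : b ^ n * b ^ (n + 1) = b ^ (2 * n + 1) := by
        rw [← pow_add]; ring_nf
      have h2 : b ^ (2 * n + 1) ≤ b ^ M := Nat.pow_le_pow_right (by omega) (by omega)
      omega
    refine AddSubmonoid.closure_mono ?_ hmem
    rintro x (rfl | rfl)
    · exact ⟨0, by omega, by simp [hp]⟩
    · exact ⟨1, hn, by rw [hq]⟩

/-- Decomposition of sums of generators. -/
lemma cunningham_sum_form (n b : ℕ) (hb : 2 ≤ b) (l : Multiset ℕ)
    (hl : ∀ y ∈ l, ∃ i ≤ n, y = b ^ (n + i) + 1) :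
    ∃ s : ℕ, l.sum = Multiset.card l + b ^ n * s ∧ Multiset.card l ≤ s := by
  induction l using Multiset.induction with
  | empty => exact ⟨0, by simp⟩
  | cons y l ih =>
    obtain ⟨s, hs, hcs⟩ := ih (fun z hz => hl z (Multiset.mem_cons_of_mem hz))
    obtain ⟨i, hi, hy⟩ := hl y (Multiset.mem_cons_self y l)
    refine ⟨b ^ i + s, ?_, ?_⟩
    · rw [Multiset.sum_cons, Multiset.card_cons, hs, hy, pow_add]
      ring
    · have h1 : 1 ≤ b ^ i := Nat.one_le_pow _ _ (by omega)
      simp only [Multiset.card_cons]; omega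

theorem cunningham_minimal_system_of_generators (n b : ℕ) (hn : 1 ≤ n)
    (hb : 2 ≤ b) (hbe : Even b) :
    AddSubmonoid.closure {m : ℕ | ∃ i ≤ n, m = b ^ (n + i) + 1}
        = cunninghamSemigroup b n ∧
    (∀ X : Set ℕ, X ⊂ {m : ℕ | ∃ i ≤ n, m = b ^ (n + i) + 1} →
        AddSubmonoid.closure X ≠ cunninghamSemigroup b n) ∧
    Set.ncard {m : ℕ | ∃ i ≤ n, m = b ^ (n + i) + 1} = n + 1 := by
  refine ⟨?_, ?_, ?_⟩
  · apply le_antisymm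
    · exact AddSubmonoid.closure_mono (fun x ⟨i, _, hx⟩ => ⟨i, hx⟩)
    · rw [cunninghamSemigroup, AddSubmonoid.closure_le]
      rintro x ⟨i, rfl⟩
      exact cunningham_key n b hn hb hbe (n + i) (by omega)
  · rintro X hX heq
    obtain ⟨g, hgA, hgX⟩ := Set.exists_of_ssubset hX
    obtain ⟨k, hk, rfl⟩ := hgA
    have hgmem : b ^ (n + k) + 1 ∈ AddSubmonoid.closure X := by
      rw [heq, cunninghamSemigroup]
      exact AddSubmonoid.subset_closure ⟨k, rfl⟩
    obtain ⟨l, hlX, hlsum⟩ := AddSubmonoid.exists_multiset_of_mem_closure hgmem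
    have hlA : ∀ y ∈ l, ∃ i ≤ n, y = b ^ (n + i) + 1 := fun y hy => hX.1 (hlX y hy)
    obtain ⟨s, hs, hcs⟩ := cunningham_sum_form n b hb l hlA
    set t := Multiset.card l with ht
    have hbn : 2 ≤ b ^ n := le_trans hb (Nat.le_self_pow (by omega) b)
    have hKB : b ^ k ≤ b ^ n := Nat.pow_le_pow_right (by omega) hk
    have hgval : b ^ (n + k) + 1 = b ^ n * b ^ k + 1 := by rw [pow_add]
    -- l.sum = t + b^n * s = b^n * b^k + 1
    have heq2 : t + b ^ n * s = b ^ n * b ^ k + 1 := by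
      rw [← hs, hlsum, hgval]
    -- s ≤ b^k
    have hsk : s ≤ b ^ k := by
      by_contra hc
      push_neg at hc
      have : b ^ n * (b ^ k + 1) ≤ b ^ n * s := Nat.mul_le_mul_left _ (by omega)
      have hexp : b ^ n * (b ^ k + 1) = b ^ n * b ^ k + b ^ n := by ring
      omega
    -- t ≤ b^n
    have htB : t ≤ b ^ n := by
      have h1 : t + b ^ n * t ≤ t + b ^ n * s := by
        have := Nat.mul_le_mul_left (b ^ n) hcs
        omega
      have h2 : b ^ n * b ^ k ≤ b ^ n * b ^ n := Nat.mul_le_mul_left _ hKB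
      nlinarith
    -- t = 1
    have ht1 : t = 1 := by
      obtain ⟨d, hd'⟩ : ∃ d, b ^ k = s + d := ⟨b ^ k - s, by omega⟩
      rcases Nat.eq_zero_or_pos d with h | h
      · have hbk : b ^ n * b ^ k = b ^ n * s := by rw [hd', h]; ring
        omega
      · have hbk : b ^ n * b ^ k = b ^ n * s + b ^ n * d := by rw [hd']; ring
        have : b ^ n ≤ b ^ n * d := Nat.le_mul_of_pos_right _ h
        omega
    obtain ⟨y, hy⟩ := Multiset.card_eq_one.mp ht1
    have : y = b ^ (n + k) + 1 := by
      rw [hy] at hlsum; simpa using hlsum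
    exact hgX (this ▸ hlX y (by simp [hy]))
  · have himg : {m : ℕ | ∃ i ≤ n, m = b ^ (n + i) + 1}
        = (fun i => b ^ (n + i) + 1) '' Set.Iic n := by
      ext m
      simp [Set.mem_image, eq_comm]
    rw [himg, Set.ncard_image_of_injOn, ← Finset.coe_Iic, Set.ncard_coe_finset, Nat.card_Iic]
    intro i _ j _ hij
    have hij' : b ^ (n + i) + 1 = b ^ (n + j) + 1 := hij
    have := Nat.pow_right_injective hb (by omega : b ^ (n + i) = b ^ (n + j))
    omega
end

section
/- Let b be a natural number with b even and b ≥ 2. Then: (1) the Frobenius number of SC⁺(b,0) is b − 1; (2) the Frobenius number of SC⁺(b,1) is b³ − 1; (3) for every n ≥ 2, the Frobenius number of SC⁺(b,n) is (b−1)·(b^(2n) + b^n + 1). -/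
/-!
An element of `SC⁺(b,n)` is `b^n * M + k` where `M` is a sum of `k` powers of `b`. Such pairs
satisfy `k ≤ M`, `M ≡ k (mod b - 1)` and `M ≡ #{zero exponents} (mod b)`; conversely, splitting
one `b^(e+1)` into `b` copies of `b^e` raises `k` by `b - 1` and keeps `M`.

For `n ≥ 1` write `c = b - 1` (odd), `B = b^n` and `F = c (B² + B + 1)`. If `F = B M + k`, then
`k ≡ c (mod B)`, `k ≤ c B` and `c ∣ 2k`, which force `k = c` and `M = c B + c`; reducing mod `b`
shows that all `c` exponents vanish, so `M = c`, which is absurd. For `1 ≤ j ≤ B` choose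
`s + t = c` with `2s ≡ j (mod c)`: then `F + j = B (c B + s) + (c + j + t B)`, and the required
`c + j + t B` powers are obtained by splitting `c • b^n + s • b^0`. Together with
`F + B + 1 = B (b + c B) + b` and the generator `B + 1` this covers everything above `F`.

For `n = 0` the generators `2` and `b + 1` give every number `≥ b`, while `b - 1` is odd and
below `b`, so it could only be a sum of `2`'s.
-/

open Multiset

namespace Cunningham

def powSum (b : ℕ) (l : Multiset ℕ) : ℕ := (l.map (b ^ ·)).sum

section powSum

variable {b : ℕ}

@[simp] lemma powSum_zero : powSum b 0 = 0 := rfl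

@[simp] lemma powSum_cons (e : ℕ) (l : Multiset ℕ) : powSum b (e ::ₘ l) = b ^ e + powSum b l := by
  simp [powSum]

@[simp] lemma powSum_singleton (e : ℕ) : powSum b {e} = b ^ e := by
  simp [powSum]

@[simp] lemma powSum_add (l₁ l₂ : Multiset ℕ) : powSum b (l₁ + l₂) = powSum b l₁ + powSum b l₂ := by
  simp [powSum]

@[simp] lemma powSum_replicate (k e : ℕ) : powSum b (replicate k e) = k * b ^ e := by
  simp [powSum]

lemma card_le_powSum (hb : 1 ≤ b) (l : Multiset ℕ) : card l ≤ powSum b l := by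
  induction l using Multiset.induction_on with
  | empty => simp
  | cons e l ih => simp only [card_cons, powSum_cons]; have := Nat.one_le_pow e b hb; omega

lemma powSum_succ_modEq_card (c : ℕ) (l : Multiset ℕ) : powSum (c + 1) l ≡ card l [MOD c] := by
  induction l using Multiset.induction_on with
  | empty => rfl
  | cons e l ih =>
    rw [powSum_cons, card_cons, add_comm (card l)]
    refine Nat.ModEq.add ?_ ih
    simpa using (show c + 1 ≡ 1 [MOD c] by simp [Nat.ModEq]).pow e

lemma powSum_modEq_count_zero (l : Multiset ℕ) : powSum b l ≡ count 0 l [MOD b] := by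
  induction l using Multiset.induction_on with
  | empty => rfl
  | cons e l ih =>
    rw [powSum_cons, count_cons, add_comm (count 0 l)]
    refine Nat.ModEq.add ?_ ih
    rcases Nat.eq_zero_or_pos e with rfl | he
    · rfl
    · simpa [he.ne'.symm] using Nat.modEq_zero_iff_dvd.2 (dvd_pow_self b he.ne')

lemma powSum_eq_card_of_count_zero_eq {l : Multiset ℕ} (h : count 0 l = card l) :
    powSum b l = card l := by
  rw [Multiset.eq_replicate_card.2 fun e he => (count_eq_card.1 h e he).symm]
  simp

lemma exists_card_add_eq_of_card_lt (hb : 1 ≤ b) {l : Multiset ℕ} (h : card l < powSum b l) :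
    ∃ l', card l' = card l + (b - 1) ∧ powSum b l' = powSum b l := by
  obtain ⟨e, he, he0⟩ : ∃ e ∈ l, e ≠ 0 := by
    by_contra! hl
    exact h.ne (powSum_eq_card_of_count_zero_eq (count_eq_card.2 fun e he => (hl e he).symm)).symm
  obtain ⟨e, rfl⟩ := Nat.exists_eq_succ_of_ne_zero he0
  obtain ⟨t, rfl⟩ := exists_cons_of_mem he
  refine ⟨replicate b e + t, ?_, ?_⟩
  · simp only [card_add, card_replicate, card_cons]
    omega
  · simp [pow_succ']

lemma exists_card_eq_add_mul (hb : 2 ≤ b) (d : ℕ) {l : Multiset ℕ}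
    (h : card l + (b - 1) * d ≤ powSum b l) :
    ∃ l', card l' = card l + (b - 1) * d ∧ powSum b l' = powSum b l := by
  induction d generalizing l with
  | zero => exact ⟨l, rfl, rfl⟩
  | succ d ih =>
    rw [Nat.mul_succ] at h ⊢
    obtain ⟨l₁, hcard, hsum⟩ := exists_card_add_eq_of_card_lt (b := b) (l := l) (by omega) (by omega)
    obtain ⟨l', hcard', hsum'⟩ := ih (l := l₁) (by omega)
    exact ⟨l', by omega, hsum'.trans hsum⟩

end powSum

lemma mem_cunninghamSemigroup_iff {b n m : ℕ} :
    m ∈ cunninghamSemigroup b n ↔ ∃ l : Multiset ℕ, b ^ n * powSum b l + card l = m := by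
  constructor
  · intro hm
    induction hm using AddSubmonoid.closure_induction with
    | mem x hx =>
      obtain ⟨i, rfl⟩ := hx
      exact ⟨{i}, by simp [pow_add]⟩
    | zero => exact ⟨0, by simp⟩
    | add x y _ _ hx hy =>
      obtain ⟨l₁, rfl⟩ := hx
      obtain ⟨l₂, rfl⟩ := hy
      exact ⟨l₁ + l₂, by simp only [powSum_add, card_add]; ring⟩
  · rintro ⟨l, rfl⟩
    induction l using Multiset.induction_on with
    | empty => simp
    | cons e l ih =>
      have hgen : b ^ (n + e) + 1 ∈ cunninghamSemigroup b n :=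
        AddSubmonoid.subset_closure ⟨e, rfl⟩
      convert (cunninghamSemigroup b n).add_mem hgen ih using 1
      simp only [powSum_cons, card_cons, pow_add]
      ring

lemma mem_of_lt_of_Ioc_subset {S : AddSubmonoid ℕ} {g N : ℕ} (hg₀ : 0 < g) (hg : g ∈ S)
    (hN : Set.Ioc N (N + g) ⊆ S) {m : ℕ} (hm : N < m) : m ∈ S := by
  induction m using Nat.strong_induction_on with
  | _ m ih =>
    by_cases hmg : m ≤ N + g
    · exact hN ⟨hm, hmg⟩
    · have hrec : m - g ∈ S := ih _ (by omega) (by omega)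
      simpa [Nat.sub_add_cancel (by omega : g ≤ m)] using S.add_mem hrec hg

theorem sub_one_not_mem_cunninghamSemigroup_zero {b : ℕ} (hb : b ≠ 0) (hbe : Even b) :
    b - 1 ∉ cunninghamSemigroup b 0 := by
  rw [mem_cunninghamSemigroup_iff]
  rintro ⟨l, hl⟩
  rw [pow_zero, one_mul] at hl
  have hcard := card_le_powSum (Nat.one_le_iff_ne_zero.2 hb) l
  have hcount := count_le_card 0 l
  have : powSum b l = count 0 l :=
    (powSum_modEq_count_zero l).eq_of_lt_of_lt (by omega) (by omega)
  obtain ⟨x, rfl⟩ := hbe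
  omega

lemma mem_cunninghamSemigroup_zero_of_lt {b m : ℕ} (hb : b ≠ 0) (hbe : Even b) (hm : b - 1 < m) :
    m ∈ cunninghamSemigroup b 0 := by
  have hgen : ∀ i, b ^ i + 1 ∈ cunninghamSemigroup b 0 := fun i =>
    AddSubmonoid.subset_closure ⟨i, by rw [zero_add]⟩
  refine mem_of_lt_of_Ioc_subset two_pos (by simpa using hgen 0) ?_ hm
  intro j ⟨hj₁, hj₂⟩
  obtain ⟨x, rfl⟩ := hbe
  obtain rfl | rfl : j = x + x ∨ j = x + x + 1 := by omega
  · have h2 : 2 ∈ cunninghamSemigroup (x + x) 0 := by simpa using hgen 0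
    simpa [smul_eq_mul, mul_two] using AddSubmonoid.nsmul_mem _ h2 x
  · simpa using hgen 1

theorem isGreatest_not_mem_cunninghamSemigroup_zero {b : ℕ} (hb : b ≠ 0) (hbe : Even b) :
    IsGreatest {m : ℕ | m ∉ cunninghamSemigroup b 0} (b - 1) :=
  ⟨sub_one_not_mem_cunninghamSemigroup_zero hb hbe,
    fun _ hm => not_lt.1 fun h => hm (mem_cunninghamSemigroup_zero_of_lt hb hbe h)⟩

lemma exists_two_mul_modEq {c : ℕ} (hc : Odd c) (j : ℕ) :
    ∃ s, 0 < s ∧ s ≤ c ∧ 2 * s ≡ j [MOD c] := by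
  obtain ⟨y, rfl⟩ := hc
  refine ⟨(j * (y + 1) + 2 * y) % (2 * y + 1) + 1, by omega,
    Nat.succ_le_of_lt (Nat.mod_lt _ (by omega)), ?_⟩
  have h0 : ((2 * y + 1 : ℕ) : ZMod (2 * y + 1)) = 0 := ZMod.natCast_self _
  rw [← ZMod.natCast_eq_natCast_iff]
  push_cast [ZMod.natCast_mod] at h0 ⊢
  linear_combination (j + 2 : ZMod (2 * y + 1)) * h0

theorem frobenius_not_mem {b n : ℕ} (hb : 2 ≤ b) (hbe : Even b) (hn : n ≠ 0) :
    (b - 1) * (b ^ (2 * n) + b ^ n + 1) ∉ cunninghamSemigroup b n := by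
  obtain ⟨c, rfl⟩ : ∃ c, b = c + 1 := ⟨b - 1, by omega⟩
  have hc : Odd c := Nat.not_even_iff_odd.1 (Nat.even_add_one.1 hbe)
  rw [Nat.add_sub_cancel, pow_mul', mem_cunninghamSemigroup_iff]
  rintro ⟨l, hl⟩
  set B := (c + 1) ^ n with hB
  set M := powSum (c + 1) l
  set k := card l
  have hcB : c < B := (Nat.lt_succ_self c).trans_le (Nat.le_self_pow hn _)
  have hBc : (B : ZMod c) = 1 := by simp [hB]
  have hMk : (M : ZMod c) = k := (ZMod.natCast_eq_natCast_iff _ _ _).2 (powSum_succ_modEq_card c l)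
  have hkM : k ≤ M := card_le_powSum (by omega) l
  have hk_le : k ≤ c * B := by nlinarith
  obtain ⟨t, hkt⟩ : ∃ t, k = c + B * t := by
    refine ⟨k / B, ?_⟩
    have h1 : (k + B * M) % B = (c + B * (c * B + c)) % B := by rw [add_comm, hl]; ring_nf
    rw [Nat.add_mul_mod_self_left, Nat.add_mul_mod_self_left, Nat.mod_eq_of_lt hcB] at h1
    rw [← h1, Nat.mod_add_div]
  have htc : t < c := by nlinarith
  have hct : c ∣ t := by
    have h2t : ((2 * t : ℕ) : ZMod c) = 0 := by
      have := congrArg (Nat.cast : ℕ → ZMod c) hl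
      push_cast [hBc, hMk, hkt, ZMod.natCast_self] at this ⊢
      linear_combination this
    exact (Nat.coprime_two_right.2 hc).dvd_of_dvd_mul_left ((ZMod.natCast_eq_zero_iff _ _).1 h2t)
  obtain rfl : t = 0 := Nat.eq_zero_of_dvd_of_lt hct htc
  have hkc : k = c := by simpa using hkt
  have hMc : M = c * B + c := by
    apply Nat.eq_of_mul_eq_mul_left (by omega : 0 < B)
    nlinarith
  have hcount : count 0 l = c := by
    have : M ≡ c [MOD c + 1] := by
      rw [hMc]
      simpa using (Nat.modEq_zero_iff_dvd.2 ((dvd_pow_self (c + 1) hn).mul_left c)).add_right c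
    have hle := count_le_card 0 l
    exact ((powSum_modEq_count_zero l).symm.trans this).eq_of_lt_of_lt (by omega) (by omega)
  have hMk' : M = k := powSum_eq_card_of_count_zero_eq (hcount.trans hkc.symm)
  have : 0 < c * B := Nat.mul_pos (by omega) (by omega)
  omega

theorem frobenius_add_mem {b n j : ℕ} (hb : 2 ≤ b) (hbe : Even b) (hn : n ≠ 0) (hj : 0 < j)
    (hjB : j ≤ b ^ n) : (b - 1) * (b ^ (2 * n) + b ^ n + 1) + j ∈ cunninghamSemigroup b n := by
  obtain ⟨c, rfl⟩ : ∃ c, b = c + 1 := ⟨b - 1, by omega⟩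
  have hc : Odd c := Nat.not_even_iff_odd.1 (Nat.even_add_one.1 hbe)
  rw [Nat.add_sub_cancel, pow_mul']
  set B := (c + 1) ^ n with hB
  have hcB : c < B := (Nat.lt_succ_self c).trans_le (Nat.le_self_pow hn _)
  have hBc : (B : ZMod c) = 1 := by simp [hB]
  obtain ⟨s, hs₀, hsc, hs⟩ := exists_two_mul_modEq hc j
  obtain ⟨t, hst⟩ : ∃ t, c = s + t := ⟨c - s, by omega⟩
  have hs' : ((2 * s : ℕ) : ZMod c) = j := (ZMod.natCast_eq_natCast_iff _ _ _).2 hs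
  have hst' : ((c : ℕ) : ZMod c) = s + t := by rw [hst, Nat.cast_add]
  rw [ZMod.natCast_self] at hst'
  push_cast at hs'
  set k := c + j + t * B with hk
  have hlow : c + s ≡ k [MOD c] := by
    rw [← ZMod.natCast_eq_natCast_iff]
    push_cast [hk, hBc, ZMod.natCast_self]
    linear_combination hs' + hst'
  have hhigh : k ≡ c * B + s [MOD c] := by
    rw [← ZMod.natCast_eq_natCast_iff]
    push_cast [hk, hBc, ZMod.natCast_self]
    linear_combination -hs' - hst'
  -- both bounds hold up to the slack `c`, which the congruences close
  have hk₁ : c + s ≤ k := hlow.le_of_lt_add (by omega)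
  have hk₂ : k ≤ c * B + s := hhigh.le_of_lt_add (by rw [hk, hst]; nlinarith)
  obtain ⟨d, hd⟩ := (Nat.modEq_iff_dvd' hk₁).1 hlow
  obtain ⟨l, hcard, hsum⟩ := exists_card_eq_add_mul (b := c + 1) hb d
    (l := replicate c n + replicate s 0) (by simp [← hB]; omega)
  rw [mem_cunninghamSemigroup_iff]
  refine ⟨l, ?_⟩
  simp only [hcard, hsum, powSum_add, powSum_replicate, card_add, card_replicate, Nat.add_sub_cancel,
    ← hB, pow_zero, mul_one]
  rw [← hd, Nat.add_sub_cancel' hk₁, hk, hst]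
  ring

theorem frobenius_add_pow_add_one_mem {b n : ℕ} (hb : 1 ≤ b) :
    (b - 1) * (b ^ (2 * n) + b ^ n + 1) + (b ^ n + 1) ∈ cunninghamSemigroup b n := by
  obtain ⟨c, rfl⟩ : ∃ c, b = c + 1 := ⟨b - 1, by omega⟩
  rw [mem_cunninghamSemigroup_iff]
  exact ⟨1 ::ₘ replicate c n, by simp; ring⟩

theorem mem_of_frobenius_lt {b n m : ℕ} (hb : 2 ≤ b) (hbe : Even b) (hn : n ≠ 0)
    (hm : (b - 1) * (b ^ (2 * n) + b ^ n + 1) < m) : m ∈ cunninghamSemigroup b n := by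
  have hgen : b ^ n + 1 ∈ cunninghamSemigroup b n := AddSubmonoid.subset_closure ⟨0, by simp⟩
  refine mem_of_lt_of_Ioc_subset (by omega) hgen ?_ hm
  rintro _ ⟨h₁, h₂⟩
  obtain ⟨j, rfl⟩ := Nat.exists_eq_add_of_lt h₁
  rcases Nat.lt_or_eq_of_le (show j + 1 ≤ b ^ n + 1 by omega) with hj | hj
  · exact frobenius_add_mem hb hbe hn j.succ_pos (by omega)
  · rw [add_assoc, hj]
    exact frobenius_add_pow_add_one_mem (by omega)

theorem isGreatest_frobenius {b n : ℕ} (hb : 2 ≤ b) (hbe : Even b) (hn : n ≠ 0) :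
    IsGreatest {m : ℕ | m ∉ cunninghamSemigroup b n} ((b - 1) * (b ^ (2 * n) + b ^ n + 1)) :=
  ⟨frobenius_not_mem hb hbe hn, fun _ hm => not_lt.1 fun h => hm (mem_of_frobenius_lt hb hbe hn h)⟩

end Cunningham

open Cunningham in
theorem cunningham_frobenius (b : ℕ) (hb : 2 ≤ b) (hbe : Even b) :
    IsGreatest {m : ℕ | m ∉ cunninghamSemigroup b 0} (b - 1) ∧
    IsGreatest {m : ℕ | m ∉ cunninghamSemigroup b 1} (b ^ 3 - 1) ∧
    (∀ n, 2 ≤ n →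
      IsGreatest {m : ℕ | m ∉ cunninghamSemigroup b n}
        ((b - 1) * (b ^ (2 * n) + b ^ n + 1))) := by
  refine ⟨isGreatest_not_mem_cunninghamSemigroup_zero (by omega) hbe, ?_,
    fun n hn => isGreatest_frobenius hb hbe (by omega)⟩
  have h := isGreatest_frobenius hb hbe one_ne_zero
  obtain ⟨c, rfl⟩ : ∃ c, b = c + 1 := ⟨b - 1, by omega⟩
  convert h using 1
  simp only [Nat.add_sub_cancel, mul_one, pow_one]
  rw [Nat.sub_eq_iff_eq_add (Nat.one_le_pow _ _ (by omega))]
  ring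
end

section
/- Let n and b be natural numbers with b even and b ≥ 2. Then the additive submonoid of ℕ generated by {b^(b^(n+i)) + 1 : i ∈ ℕ} equals the additive submonoid of ℕ generated by the two elements b^(b^n) + 1 and b^(b^(n+1)) + 1. -/
/-!
Put `A = b ^ b ^ n`, so that the `i`-th generator is `A ^ b ^ i + 1`. For even `b` and `i ≥ 1`
the exponent `b ^ i` exceeds `b` by an even number, and modulo `A + 1` we have `A ^ 2 ≡ 1`:
explicitly `A ^ (m + 2) + 1 = (A ^ m + 1) + A ^ m (A - 1) (A + 1)`. Hence every generator lies in
the monoid generated by `A + 1` and `A ^ b + 1`, the generators for `i = 0` and `i = 1`.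
-/

namespace Nat

theorem pow_add_two_add_one (A m : ℕ) (hA : 0 < A) :
    A ^ (m + 2) + 1 = (A ^ m + 1) + (A ^ m * (A - 1)) • (A + 1) := by
  obtain ⟨c, rfl⟩ : ∃ c, A = c + 1 := ⟨A - 1, by omega⟩
  simp only [add_tsub_cancel_right, smul_eq_mul]
  ring

theorem pow_add_two_mul_add_one_mem_closure (A b k : ℕ) :
    A ^ (b + 2 * k) + 1 ∈ AddSubmonoid.closure {A + 1, A ^ b + 1} := by
  rcases A.eq_zero_or_pos with rfl | hA
  · have hone : (1 : ℕ) ∈ AddSubmonoid.closure {0 + 1, 0 ^ b + 1} :=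
      AddSubmonoid.subset_closure (Set.mem_insert _ _)
    simpa using nsmul_mem hone (0 ^ (b + 2 * k) + 1)
  induction k with
  | zero => exact AddSubmonoid.subset_closure (Set.mem_insert_of_mem _ rfl)
  | succ k ih =>
    rw [Nat.mul_succ, ← add_assoc, pow_add_two_add_one A _ hA]
    exact add_mem ih (nsmul_mem (AddSubmonoid.subset_closure (Set.mem_insert _ _)) _)

theorem exists_pow_eq_add_two_mul {b i : ℕ} (hb : Even b) (hi : i ≠ 0) :
    ∃ k, b ^ i = b + 2 * k := by
  have hle : b ≤ b ^ i := Nat.le_self_pow hi b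
  obtain ⟨k, hk⟩ : Even (b ^ i - b) := (Nat.even_sub hle).mpr (by simp [hb.pow_of_ne_zero hi, hb])
  exact ⟨k, by omega⟩

end Nat

theorem fermat_two_generators_general (n b : ℕ) (hbe : Even b) :
    AddSubmonoid.closure {m : ℕ | ∃ i : ℕ, m = b ^ (b ^ (n + i)) + 1}
      = AddSubmonoid.closure {b ^ (b ^ n) + 1, b ^ (b ^ (n + 1)) + 1} := by
  have hpow : ∀ i, b ^ (b ^ (n + i)) = (b ^ b ^ n) ^ (b ^ i) := fun i => by
    rw [← pow_mul, ← pow_add]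
  apply le_antisymm
  · rw [AddSubmonoid.closure_le]
    rintro _ ⟨i, rfl⟩
    rcases eq_or_ne i 0 with rfl | hi
    · exact AddSubmonoid.subset_closure (Set.mem_insert _ _)
    · obtain ⟨k, hk⟩ := Nat.exists_pow_eq_add_two_mul hbe hi
      rw [hpow i, hk, hpow 1, pow_one]
      exact Nat.pow_add_two_mul_add_one_mem_closure _ b k
  · rw [AddSubmonoid.closure_le]
    rintro _ (rfl | rfl)
    · exact AddSubmonoid.subset_closure ⟨0, rfl⟩
    · exact AddSubmonoid.subset_closure ⟨1, rfl⟩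

theorem fermat_two_generators (n b : ℕ) (hb : 2 ≤ b) (hbe : Even b) :
    AddSubmonoid.closure {m : ℕ | ∃ i : ℕ, m = b ^ (b ^ (n + i)) + 1}
      = AddSubmonoid.closure {b ^ (b ^ n) + 1, b ^ (b ^ (n + 1)) + 1} :=
  fermat_two_generators_general n b hbe
end
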